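/- arXiv:2502.16005 — 6 statements merged into one kernel-verified Lean document; each statement's English description precedes it below -/
import Mathlib

section
/- Let z_1,...,z_m be real-valued random variables with marginal Lebesgue densities f^(1),...,f^(m), let H0 ⊆ {1,...,m} be the set of true nulls, let λ > 0, and define lfdr(t) := Σ_{i∈H0} f^(i)(t) / Σ_{i=1}^m f^(i)(t) wherever Σ_i f^(i)(t) > 0 (set lfdr(t) := 1 elsewhere). For any measurable decision function g : R → {0,1} (1 = reject), define the expected weighted classification loss R(g) := λ · Σ_{i∈H0} P(g(z_i) = 1) + Σ_{i∉H0} P(g(z_i) = 0). Then R(g) ≥ R(g*) for every measurable g, where g*(t) := 1 if lfdr(t) ≤ 1/(1+λ) and g*(t) := 0 otherwise. That is, thresholding the lfdr at 1/(1+λ) is the optimal separable rejection rule for the weighted classification loss. -/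
open MeasureTheory Filter Set

/-- Optimality of thresholding the lfdr at `1/(1+λ)` for the weighted
classification loss.  For any measurable decision rule `g : ℝ → Bool` (`true` = reject),
the expected weighted classification risk
`λ · ∑_{i ∈ H0} P(g(z_i) = true) + ∑_{i ∉ H0} P(g(z_i) = false)` is minimized by
`g*(t) = (lfdr t ≤ 1/(1+λ))`, where `lfdr t = (∑_{i∈H0} f i t)/(∑_i f i t)` when the
denominator is positive and `lfdr t = 1` otherwise. -/
theorem stmt2
    {Ω : Type} [MeasurableSpace Ω] (μ : Measure Ω) [IsProbabilityMeasure μ]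
    (m : ℕ) (z : Fin m → Ω → ℝ) (hz : ∀ i, Measurable (z i))
    (f : Fin m → ℝ → ℝ) (hfmeas : ∀ i, Measurable (f i)) (hfnonneg : ∀ i t, 0 ≤ f i t)
    (hmarg : ∀ i, Measure.map (z i) μ
      = (volume : Measure ℝ).withDensity (fun t => ENNReal.ofReal (f i t)))
    (H0 : Finset (Fin m))
    (lam : ℝ) (hlam : 0 < lam)
    (lfdr : ℝ → ℝ)
    (hlfdr : ∀ t, lfdr t =
      if 0 < ∑ i, f i t then (∑ i ∈ H0, f i t) / ∑ i, f i t else 1)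
    (g : ℝ → Bool) (hg : Measurable g) :
    lam * ∑ i ∈ H0,
        (μ {ω | decide (lfdr (z i ω) ≤ 1 / (1 + lam)) = true}).toReal
      + ∑ i ∈ H0ᶜ,
        (μ {ω | decide (lfdr (z i ω) ≤ 1 / (1 + lam)) = false}).toReal
    ≤ lam * ∑ i ∈ H0, (μ {ω | g (z i ω) = true}).toReal
      + ∑ i ∈ H0ᶜ, (μ {ω | g (z i ω) = false}).toReal := by
  classical
  have hlam1 : (0:ℝ) < 1 + lam := by linarith
  -- measurability of lfdr
  have hsum_meas : Measurable fun t => ∑ i, f i t :=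
    Finset.measurable_sum _ fun i _ => hfmeas i
  have hH0_meas : Measurable fun t => ∑ i ∈ H0, f i t :=
    Finset.measurable_sum _ fun i _ => hfmeas i
  have hlfdr_meas : Measurable lfdr := by
    have : lfdr = fun t => if 0 < ∑ i, f i t then (∑ i ∈ H0, f i t) / ∑ i, f i t else 1 :=
      funext hlfdr
    rw [this]
    exact Measurable.ite (measurableSet_lt measurable_const hsum_meas)
      (hH0_meas.div hsum_meas) measurable_const
  set A : Set ℝ := {t | lfdr t ≤ 1 / (1 + lam)} with hA
  have hA_meas : MeasurableSet A := hlfdr_meas measurableSet_Iic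
  set B : Set ℝ := {t | g t = true} with hB
  have hB_meas : MeasurableSet B := hg (measurableSet_singleton true)
  -- density functions
  set P : ℝ → ENNReal := fun t => ENNReal.ofReal lam * ∑ i ∈ H0, ENNReal.ofReal (f i t) with hPdef
  set Q : ℝ → ENNReal := fun t => ∑ i ∈ H0ᶜ, ENNReal.ofReal (f i t) with hQdef
  have hP_meas : Measurable P :=
    (Finset.measurable_sum _ fun i _ => (hfmeas i).ennreal_ofReal).const_mul _
  have hQ_meas : Measurable Q :=
    Finset.measurable_sum _ fun i _ => (hfmeas i).ennreal_ofReal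
  -- probabilities as integrals
  have hprob : ∀ (i : Fin m) (T : Set ℝ), MeasurableSet T →
      μ (z i ⁻¹' T) = ∫⁻ t in T, ENNReal.ofReal (f i t) ∂volume := by
    intro i T hT
    rw [← Measure.map_apply (hz i) hT, hmarg i, withDensity_apply _ hT]
  -- risk as an integral
  have hrisk : ∀ (T : Set ℝ), MeasurableSet T →
      ENNReal.ofReal lam * ∑ i ∈ H0, μ (z i ⁻¹' T) + ∑ i ∈ H0ᶜ, μ (z i ⁻¹' Tᶜ)
      = ∫⁻ t, (T.indicator P t + Tᶜ.indicator Q t) ∂volume := by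
    intro T hT
    have h1 : ∑ i ∈ H0, μ (z i ⁻¹' T)
        = ∫⁻ t in T, ∑ i ∈ H0, ENNReal.ofReal (f i t) ∂volume := by
      rw [lintegral_finset_sum' _ fun i _ => ((hfmeas i).ennreal_ofReal).aemeasurable]
      exact Finset.sum_congr rfl fun i _ => hprob i T hT
    have h2 : ∑ i ∈ H0ᶜ, μ (z i ⁻¹' Tᶜ)
        = ∫⁻ t in Tᶜ, Q t ∂volume := by
      rw [lintegral_finset_sum' _ fun i _ => ((hfmeas i).ennreal_ofReal).aemeasurable]
      exact Finset.sum_congr rfl fun i _ => hprob i Tᶜ hT.compl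
    rw [h1, h2, ← lintegral_const_mul _ (Finset.measurable_sum _ fun i _ => (hfmeas i).ennreal_ofReal)]
    rw [← lintegral_indicator hT, ← lintegral_indicator hT.compl]
    rw [← lintegral_add_left ((hP_meas.indicator hT))]
  -- pointwise key inequality
  have hkey : ∀ t : ℝ, (lfdr t ≤ 1 / (1 + lam) → P t ≤ Q t)
      ∧ (¬ lfdr t ≤ 1 / (1 + lam) → Q t ≤ P t) := by
    intro t
    have ha' : (0:ℝ) ≤ ∑ i ∈ H0, f i t := Finset.sum_nonneg fun i _ => hfnonneg i t
    have hb' : (0:ℝ) ≤ ∑ i ∈ H0ᶜ, f i t := Finset.sum_nonneg fun i _ => hfnonneg i t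
    have hsplit : ∑ i ∈ H0, f i t + ∑ i ∈ H0ᶜ, f i t = ∑ i, f i t :=
      Finset.sum_add_sum_compl H0 _
    have hP : P t = ENNReal.ofReal (lam * ∑ i ∈ H0, f i t) := by
      simp only [hPdef]
      rw [ENNReal.ofReal_mul hlam.le, ENNReal.ofReal_sum_of_nonneg fun i _ => hfnonneg i t]
    have hQ : Q t = ENNReal.ofReal (∑ i ∈ H0ᶜ, f i t) := by
      simp only [hQdef]
      rw [ENNReal.ofReal_sum_of_nonneg fun i _ => hfnonneg i t]
    rw [hP, hQ]
    by_cases hs : 0 < ∑ i, f i t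
    · have hlf : lfdr t = (∑ i ∈ H0, f i t) / ∑ i, f i t := by rw [hlfdr t, if_pos hs]
      constructor
      · intro hle
        apply ENNReal.ofReal_le_ofReal
        rw [hlf, div_le_div_iff₀ hs hlam1] at hle
        nlinarith [hle, hsplit]
      · intro hgt
        apply ENNReal.ofReal_le_ofReal
        push_neg at hgt
        rw [hlf, div_lt_div_iff₀ hlam1 hs] at hgt
        nlinarith [hgt, hsplit]
    · have hz0 : ∑ i, f i t = 0 :=
        le_antisymm (not_lt.mp hs) (Finset.sum_nonneg fun i _ => hfnonneg i t)
      have ha0 : ∑ i ∈ H0, f i t = 0 := by nlinarith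
      have hb0 : ∑ i ∈ H0ᶜ, f i t = 0 := by nlinarith
      rw [ha0, hb0]
      simp
  -- ENNReal risk inequality
  have hmono : ∫⁻ t, (A.indicator P t + Aᶜ.indicator Q t) ∂volume
      ≤ ∫⁻ t, (B.indicator P t + Bᶜ.indicator Q t) ∂volume := by
    apply lintegral_mono
    intro t
    dsimp only
    by_cases htA : t ∈ A
    · rw [Set.indicator_of_mem htA, Set.indicator_of_notMem (by simpa using htA)]
      by_cases htB : t ∈ B
      · rw [Set.indicator_of_mem htB, Set.indicator_of_notMem (by simpa using htB)]
      · rw [Set.indicator_of_notMem htB, Set.indicator_of_mem (by simpa using htB)]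
        simpa using (hkey t).1 htA
    · rw [Set.indicator_of_notMem htA, Set.indicator_of_mem (by simpa using htA)]
      by_cases htB : t ∈ B
      · rw [Set.indicator_of_mem htB, Set.indicator_of_notMem (by simpa using htB)]
        simpa using (hkey t).2 htA
      · rw [Set.indicator_of_notMem htB, Set.indicator_of_mem (by simpa using htB)]
  have hineq : ENNReal.ofReal lam * ∑ i ∈ H0, μ (z i ⁻¹' A) + ∑ i ∈ H0ᶜ, μ (z i ⁻¹' Aᶜ)
      ≤ ENNReal.ofReal lam * ∑ i ∈ H0, μ (z i ⁻¹' B) + ∑ i ∈ H0ᶜ, μ (z i ⁻¹' Bᶜ) := by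
    rw [hrisk A hA_meas, hrisk B hB_meas]; exact hmono
  -- identify the sets in the statement
  have hsetA : ∀ i : Fin m,
      {ω | decide (lfdr (z i ω) ≤ 1 / (1 + lam)) = true} = z i ⁻¹' A := by
    intro i; ext ω; simp [hA]
  have hsetA' : ∀ i : Fin m,
      {ω | decide (lfdr (z i ω) ≤ 1 / (1 + lam)) = false} = z i ⁻¹' Aᶜ := by
    intro i; ext ω; simp [hA]
  have hsetB : ∀ i : Fin m, {ω | g (z i ω) = true} = z i ⁻¹' B := by
    intro i; ext ω; simp [hB]
  have hsetB' : ∀ i : Fin m, {ω | g (z i ω) = false} = z i ⁻¹' Bᶜ := by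
    intro i; ext ω; simp [hB]
  -- finiteness
  have hfin : ∀ (s : Finset (Fin m)) (T : Set ℝ), (∑ i ∈ s, μ (z i ⁻¹' T)) ≠ ⊤ :=
    fun s T => (ENNReal.sum_lt_top.mpr fun i _ => (measure_lt_top μ _)).ne
  have htoReal : ∀ (T : Set ℝ),
      (ENNReal.ofReal lam * ∑ i ∈ H0, μ (z i ⁻¹' T) + ∑ i ∈ H0ᶜ, μ (z i ⁻¹' Tᶜ)).toReal
      = lam * ∑ i ∈ H0, (μ (z i ⁻¹' T)).toReal + ∑ i ∈ H0ᶜ, (μ (z i ⁻¹' Tᶜ)).toReal := by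
    intro T
    rw [ENNReal.toReal_add (by
        exact ENNReal.mul_ne_top ENNReal.ofReal_ne_top (hfin H0 T)) (hfin H0ᶜ Tᶜ),
      ENNReal.toReal_mul, ENNReal.toReal_ofReal hlam.le,
      ENNReal.toReal_sum fun i _ => (measure_lt_top μ _).ne,
      ENNReal.toReal_sum fun i _ => (measure_lt_top μ _).ne]
  calc lam * ∑ i ∈ H0, (μ {ω | decide (lfdr (z i ω) ≤ 1 / (1 + lam)) = true}).toReal
      + ∑ i ∈ H0ᶜ, (μ {ω | decide (lfdr (z i ω) ≤ 1 / (1 + lam)) = false}).toReal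
      = (ENNReal.ofReal lam * ∑ i ∈ H0, μ (z i ⁻¹' A) + ∑ i ∈ H0ᶜ, μ (z i ⁻¹' Aᶜ)).toReal := by
        simp only [hsetA, hsetA', htoReal A]
    _ ≤ (ENNReal.ofReal lam * ∑ i ∈ H0, μ (z i ⁻¹' B) + ∑ i ∈ H0ᶜ, μ (z i ⁻¹' Bᶜ)).toReal := by
        apply ENNReal.toReal_mono _ hineq
        exact ENNReal.add_ne_top.mpr ⟨ENNReal.mul_ne_top ENNReal.ofReal_ne_top (hfin H0 B), hfin H0ᶜ Bᶜ⟩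
    _ = lam * ∑ i ∈ H0, (μ {ω | g (z i ω) = true}).toReal
      + ∑ i ∈ H0ᶜ, (μ {ω | g (z i ω) = false}).toReal := by
        simp only [hsetB, hsetB', htoReal B]
end

section
/- Let p_1,...,p_m be independent random variables in [0,1] with atomless (continuous) distributions, let H0 ⊆ {1,...,m} with |H0| = m_0 be the set of true nulls, and suppose p_i ~ Uniform(0,1) for every i ∈ H0. Fix α ∈ (0,1) and let R_α := argmax_{k ∈ {0,...,m}} (αk/m − p_(k)), where p_(1) ≤ ... ≤ p_(m) are the order statistics and p_(0) := 0 (the argmax is almost surely unique). Then the boundary false discovery rate of the support-line procedure satisfies P(R_α ≥ 1 and the index i achieving p_i = p_(R_α) lies in H0) = (m_0/m) · α. -/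
open MeasureTheory ProbabilityTheory Filter Set

/-- The `k`-th order statistic of the values `v 0, ..., v (m-1)`:
`orderStat v 0 = 0`, and for `1 ≤ k ≤ m` it is the `k`-th smallest value. -/
noncomputable def orderStat {m : ℕ} (v : Fin m → ℝ) (k : ℕ) : ℝ :=
  if k = 0 then 0
  else sInf {x : ℝ | k ≤ (Finset.univ.filter (fun i => v i ≤ x)).card}

/-- The support-line objective `k ↦ α k / m − p_(k)`. -/
noncomputable def slObj (α : ℝ) {m : ℕ} (v : Fin m → ℝ) (k : ℕ) : ℝ :=
  α * (k : ℝ) / (m : ℝ) - orderStat v k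

/-- The number of rejections `R_α` of the support-line procedure at level `α`:
a maximizer of the support-line objective over `k ∈ {0, ..., m}`
(the largest one, if there are several; ties are a.s. absent here). -/
noncomputable def slR (α : ℝ) {m : ℕ} (v : Fin m → ℝ) : ℕ :=
  sSup {k : ℕ | k ≤ m ∧ ∀ j ≤ m, slObj α v j ≤ slObj α v k}

/-- The rejection threshold `τ̂_α = p_(R_α)` of the support-line procedure. -/
noncomputable def slTau (α : ℝ) {m : ℕ} (v : Fin m → ℝ) : ℝ :=
  orderStat v (slR α v)

/-!
Condition on all p-values except a true null `p_i`, which is uniform on `[0, 1]`. For an inserted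
value `t` of `p_i`, the order statistics `q_0 = 0 ≤ q_1 ≤ ⋯ ≤ q_m = 1` of the other values (with
`1` appended) cut `[0, 1]` into slots. While `t` runs through the slot `[q_r, q_{r+1}]` only the
`(r+1)`-th objective value `α (r+1) / m - t` moves, so `i` is the boundary rejection exactly on an
initial piece of the slot, up to its endpoints, whose length is the drop of the optimal value
`max_k (α k / m - p_(k))` across the slot. The drops telescope to the difference between the
optimal values for `t = 0` and `t = 1`, which is `α / m` since inserting `0` shifts every rank
by one. Summing over the true nulls, whose boundary events overlap only on the null set
`{p_i = p_j}`, gives `m₀ α / m`.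
-/

section OrderStat

open Function Finset

variable {m : ℕ}

@[simp] lemma orderStat_zero (v : Fin m → ℝ) : orderStat v 0 = 0 := by simp [orderStat]

lemma orderStat_le_iff (v : Fin m → ℝ) {k : ℕ} (hk : 1 ≤ k) (hkm : k ≤ m) (y : ℝ) :
    orderStat v k ≤ y ↔ k ≤ #{j | v j ≤ y} := by
  set S := {x : ℝ | k ≤ #{j | v j ≤ x}}
  have hS : ∀ {x x'}, x ≤ x' → x ∈ S → x' ∈ S := fun hxx' hx => hx.trans <|
    Finset.card_le_card fun j hj =>
      mem_filter.2 ⟨(mem_filter.1 hj).1, (mem_filter.1 hj).2.trans hxx'⟩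
  -- `S` has a least element, a data point: the largest data point below `x ∈ S` still lies in `S`
  have hleast : ∃ c ∈ S, ∀ x ∈ S, c ≤ x := by
    have hne : ({j | v j ∈ S} : Finset (Fin m)).Nonempty := by
      obtain ⟨j, -, hj⟩ := exists_max_image univ v (univ_nonempty_iff.2 ⟨⟨0, by omega⟩⟩)
      refine ⟨j, mem_filter.2 ⟨mem_univ _, ?_⟩⟩
      simpa [S, filter_true_of_mem fun l _ => hj l (mem_univ l)] using hkm
    obtain ⟨j₀, hj₀, hmin⟩ := exists_min_image _ v hne
    refine ⟨v j₀, (mem_filter.1 hj₀).2, fun x hx => ?_⟩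
    have hpos : ({j | v j ≤ x} : Finset (Fin m)).Nonempty := card_pos.1 (hk.trans hx)
    obtain ⟨j, hj, hmax⟩ := exists_max_image _ v hpos
    have hjS : v j ∈ S :=
      hx.trans (Finset.card_le_card fun l hl => mem_filter.2 ⟨mem_univ _, hmax l hl⟩)
    exact (hmin j (mem_filter.2 ⟨mem_univ _, hjS⟩)).trans (mem_filter.1 hj).2
  obtain ⟨c, hcS, hc⟩ := hleast
  have hos : orderStat v k = c := by
    rw [orderStat, if_neg (by omega)]
    exact IsLeast.csInf_eq ⟨hcS, hc⟩
  rw [hos]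
  exact ⟨fun h => hS h hcS, hc y⟩

lemma orderStat_le_orderStat (v : Fin m → ℝ) {k k' : ℕ} (hk : 1 ≤ k) (hkk' : k ≤ k')
    (hk' : k' ≤ m) : orderStat v k ≤ orderStat v k' := by
  rw [orderStat_le_iff v hk (hkk'.trans hk')]
  exact hkk'.trans ((orderStat_le_iff v (hk.trans hkk') hk' _).1 le_rfl)

lemma orderStat_mono {v w : Fin m → ℝ} (hvw : v ≤ w) {k : ℕ} (hkm : k ≤ m) :
    orderStat v k ≤ orderStat w k := by
  rcases Nat.eq_zero_or_pos k with rfl | hk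
  · simp
  rw [orderStat_le_iff v hk hkm]
  refine ((orderStat_le_iff w hk hkm _).1 le_rfl).trans (Finset.card_le_card fun j hj => ?_)
  simp only [mem_filter] at hj ⊢
  exact ⟨hj.1, (hvw j).trans hj.2⟩

lemma le_orderStat {v : Fin m → ℝ} {a : ℝ} (hv : ∀ j, a ≤ v j) {k : ℕ} (hk : 1 ≤ k)
    (hkm : k ≤ m) : a ≤ orderStat v k := by
  by_contra! h
  have := (orderStat_le_iff v hk hkm _).1 le_rfl
  rw [filter_false_of_mem fun j _ => not_le.2 (h.trans_le (hv j)), Finset.card_empty] at this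
  omega

lemma orderStat_le {v : Fin m → ℝ} {b : ℝ} (hv : ∀ j, v j ≤ b) {k : ℕ} (hk : 1 ≤ k)
    (hkm : k ≤ m) : orderStat v k ≤ b := by
  rw [orderStat_le_iff v hk hkm, filter_true_of_mem fun j _ => hv j, card_univ, Fintype.card_fin]
  exact hkm

lemma orderStat_one_le (v : Fin m → ℝ) (j : Fin m) : orderStat v 1 ≤ v j :=
  (orderStat_le_iff v le_rfl j.pos _).2 (card_pos.2 ⟨j, by simp⟩)

lemma le_orderStat_card (v : Fin m → ℝ) (j : Fin m) : v j ≤ orderStat v m := by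
  have hcard := (orderStat_le_iff v j.pos le_rfl _).1 le_rfl
  refine card_filter_eq_iff.1 (le_antisymm (card_filter_le _ (fun l => v l ≤ orderStat v m)) ?_) j
    (Finset.mem_univ j)
  simpa using hcard

lemma card_filter_update_le (x : Fin m → ℝ) (i : Fin m) (t y : ℝ) :
    #{j | update x i t j ≤ y} =
      #{j ∈ Finset.univ.erase i | x j ≤ y} + if t ≤ y then 1 else 0 := by
  rw [card_filter, card_filter, ← add_sum_erase _ _ (Finset.mem_univ i), update_self, add_comm]
  congr 1
  exact sum_congr rfl fun j hj => by rw [update_of_ne (ne_of_mem_erase hj)]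

lemma orderStat_update (x : Fin m → ℝ) (i : Fin m) {a t b : ℝ} (hat : a ≤ t) (htb : t ≤ b)
    {k : ℕ} (hk : 1 ≤ k) (hkm : k ≤ m) :
    orderStat (update x i t) k
      = max (orderStat (update x i a) k) (min t (orderStat (update x i b) k)) := by
  refine eq_of_forall_ge_iff fun y => ?_
  simp only [max_le_iff, min_le_iff, orderStat_le_iff _ hk hkm, card_filter_update_le]
  by_cases hty : t ≤ y
  · simp [hty, hat.trans hty]
  · have hby : ¬ b ≤ y := fun h => hty (htb.trans h)
    by_cases hay : a ≤ y
    · simp [hty, hby, hay]; omega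
    · simp [hty, hby, hay]

lemma update_mem_Icc {x : Fin m → ℝ} {i : Fin m} {a b c : ℝ} (hx : ∀ j ≠ i, x j ∈ Icc a b)
    (hc : c ∈ Icc a b) (j : Fin m) : update x i c j ∈ Icc a b :=
  (forall_update_iff x fun _ y => y ∈ Icc a b).2 ⟨hc, hx⟩ j

lemma orderStat_update_succ (x : Fin m → ℝ) (i : Fin m) {a b : ℝ} (hab : a ≤ b)
    (hx : ∀ j ≠ i, x j ∈ Icc a b) {k : ℕ} (hk : 1 ≤ k) (hkm : k < m) :
    orderStat (update x i a) (k + 1) = orderStat (update x i b) k := by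
  refine eq_of_forall_ge_iff fun y => ?_
  rcases lt_or_ge y a with hya | hay
  · have hlow : ∀ c ∈ Icc a b, ∀ k', 1 ≤ k' → k' ≤ m → y < orderStat (update x i c) k' :=
      fun c hc k' hk' hk'm =>
        hya.trans_le (le_orderStat (fun j => (update_mem_Icc hx hc j).1) hk' hk'm)
    simp only [not_le.2 (hlow a ⟨le_rfl, hab⟩ _ (by omega) hkm),
      not_le.2 (hlow b ⟨hab, le_rfl⟩ _ hk hkm.le)]
  rcases lt_or_ge y b with hyb | hby
  · simp only [orderStat_le_iff _ hk hkm.le, orderStat_le_iff _ (by omega : 1 ≤ k + 1) hkm,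
      card_filter_update_le, if_pos hay, if_neg (not_le.2 hyb)]
    omega
  · have hup : ∀ c ∈ Icc a b, ∀ k', 1 ≤ k' → k' ≤ m → orderStat (update x i c) k' ≤ y :=
      fun c hc k' hk' hk'm =>
        (orderStat_le (fun j => (update_mem_Icc hx hc j).2) hk' hk'm).trans hby
    simp only [hup a ⟨le_rfl, hab⟩ _ (by omega) hkm, hup b ⟨hab, le_rfl⟩ _ hk hkm.le]

end OrderStat

section SupportLine

open Finset

variable {m : ℕ}

noncomputable def slMax (α : ℝ) (v : Fin m → ℝ) : ℝ := slObj α v (slR α v)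

@[simp] lemma slObj_zero (α : ℝ) (v : Fin m → ℝ) : slObj α v 0 = 0 := by simp [slObj]

lemma slR_mem (α : ℝ) (v : Fin m → ℝ) :
    slR α v ≤ m ∧ ∀ j ≤ m, slObj α v j ≤ slObj α v (slR α v) := by
  obtain ⟨k, hk, hmax⟩ := exists_max_image (range (m + 1)) (slObj α v) nonempty_range_add_one
  refine Nat.sSup_mem (s := {k | k ≤ m ∧ ∀ j ≤ m, slObj α v j ≤ slObj α v k}) ⟨k, ?_⟩
    ⟨m, fun _ h => h.1⟩
  exact ⟨Nat.lt_succ_iff.1 (mem_range.1 hk),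
    fun j hj => hmax j (mem_range.2 (Nat.lt_succ_of_le hj))⟩

lemma slR_le (α : ℝ) (v : Fin m → ℝ) : slR α v ≤ m := (slR_mem α v).1

lemma slObj_le_slMax (α : ℝ) (v : Fin m → ℝ) {j : ℕ} (hj : j ≤ m) : slObj α v j ≤ slMax α v :=
  (slR_mem α v).2 j hj

lemma slMax_nonneg (α : ℝ) (v : Fin m → ℝ) : 0 ≤ slMax α v := by
  simpa using slObj_le_slMax α v (Nat.zero_le m)

lemma le_slR_iff (α : ℝ) (v : Fin m → ℝ) (k : ℕ) :
    k ≤ slR α v ↔ ∃ k' ≤ m, k ≤ k' ∧ ∀ j ≤ m, slObj α v j ≤ slObj α v k' :=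
  ⟨fun h => ⟨slR α v, slR_le α v, h, (slR_mem α v).2⟩,
    fun ⟨_, hk'm, hkk', hk'⟩ => hkk'.trans (le_csSup ⟨m, fun _ h => h.1⟩ ⟨hk'm, hk'⟩)⟩

lemma slR_eq_of_forall_lt (α : ℝ) (v : Fin m → ℝ) {k : ℕ} (hkm : k ≤ m)
    (hk : ∀ j ≤ m, j ≠ k → slObj α v j < slObj α v k) : slR α v = k := by
  by_contra hne
  exact (hk _ (slR_le α v) hne).not_ge ((slR_mem α v).2 k hkm)

lemma slMax_anti (α : ℝ) {v w : Fin m → ℝ} (hvw : v ≤ w) : slMax α w ≤ slMax α v :=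
  calc slMax α w ≤ slObj α v (slR α w) := sub_le_sub_left (orderStat_mono hvw (slR_le α w)) _
    _ ≤ slMax α v := slObj_le_slMax α v (slR_le α w)

lemma exists_slR_threshold (α : ℝ) {r : ℕ} (hr : r ≠ 0) (hrm : r ≤ m) (c : ℕ → ℝ) :
    ∃ C : ℝ, ∀ v : Fin m → ℝ, (∀ k ≤ m, k ≠ r → slObj α v k = c k) →
      slMax α v = max (slObj α v r) C ∧ (C < slObj α v r → slR α v = r) ∧
        (slR α v = r → C ≤ slObj α v r) := by
  have hmem : ∀ {k}, k ≤ m → k ≠ r → k ∈ (range (m + 1)).erase r := fun hkm hkr =>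
    mem_erase.2 ⟨hkr, mem_range.2 (Nat.lt_succ_of_le hkm)⟩
  have hne : ((range (m + 1)).erase r).Nonempty := ⟨0, hmem (Nat.zero_le m) (Ne.symm hr)⟩
  refine ⟨((range (m + 1)).erase r).sup' hne c, fun v hv => ?_⟩
  set C := ((range (m + 1)).erase r).sup' hne c
  have hc : ∀ k ∈ (range (m + 1)).erase r, slObj α v k = c k := fun k hk => by
    obtain ⟨hkr, hk⟩ := mem_erase.1 hk
    exact hv k (Nat.lt_succ_iff.1 (mem_range.1 hk)) hkr
  have hle_C : ∀ {k}, k ≤ m → k ≠ r → slObj α v k ≤ C :=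
    fun hkm hkr => (hc _ (hmem hkm hkr)).trans_le (le_sup' c (hmem hkm hkr))
  have hC_le : ∀ {k'}, (∀ k ≤ m, slObj α v k ≤ slObj α v k') → C ≤ slObj α v k' :=
    fun hk' => sup'_le _ _ fun k hk => (hc k hk).symm.trans_le <|
      hk' k (Nat.lt_succ_iff.1 (mem_range.1 (mem_of_mem_erase hk)))
  refine ⟨le_antisymm ?_ (max_le (slObj_le_slMax α v hrm) (hC_le (slR_mem α v).2)),
    fun hlt => slR_eq_of_forall_lt α v hrm fun j hj hjr => (hle_C hj hjr).trans_lt hlt,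
    fun hR => hR ▸ hC_le (slR_mem α v).2⟩
  by_cases hR : slR α v = r
  · exact le_max_of_le_left (by rw [slMax, hR])
  · exact le_max_of_le_right (hle_C (slR_le α v) hR)

end SupportLine

def boundaryEvent (α : ℝ) {m : ℕ} (i : Fin m) : Set (Fin m → ℝ) :=
  {v | 1 ≤ slR α v ∧ v i = slTau α v}


section Measurability

open Finset

variable {m : ℕ}

lemma measurable_orderStat (k : ℕ) : Measurable fun v : Fin m → ℝ => orderStat v k := by
  rcases Nat.eq_zero_or_pos k with rfl | hk
  · simp
  rcases lt_or_ge m k with hmk | hkm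
  -- for `k > m` the defining set is empty and `sInf ∅ = 0`
  · have hzero : ∀ v : Fin m → ℝ, orderStat v k = 0 := fun v => by
      have : {x : ℝ | k ≤ #{j | v j ≤ x}} = ∅ := Set.eq_empty_of_forall_notMem fun x hx =>
        absurd ((card_filter_le _ _).trans_lt (by simpa using hmk)) (not_lt.2 hx)
      rw [orderStat, if_neg hk.ne', this, Real.sInf_empty]
    simp [hzero]
  refine measurable_of_Iic fun c => ?_
  have hpre : (fun v : Fin m → ℝ => orderStat v k) ⁻¹' Iic c = {v | k ≤ #{j | v j ≤ c}} :=
    Set.ext fun v => orderStat_le_iff v hk hkm c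
  simp_rw [hpre, card_filter]
  exact measurableSet_le measurable_const (Finset.measurable_sum _ fun j _ =>
    Measurable.ite (measurableSet_le (measurable_pi_apply j) measurable_const) measurable_const
      measurable_const)

lemma measurable_slR (α : ℝ) : Measurable (slR α : (Fin m → ℝ) → ℕ) := by
  have hobj : ∀ k, Measurable fun v : Fin m → ℝ => slObj α v k :=
    fun k => measurable_const.sub (measurable_orderStat k)
  have hge : ∀ k, MeasurableSet {v : Fin m → ℝ | k ≤ slR α v} := fun k => by
    simp_rw [le_slR_iff, Set.ofPred_exists, Set.ofPred_and, Set.ofPred_forall]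
    exact .iUnion fun k' => (MeasurableSet.const _).inter <| (MeasurableSet.const _).inter <|
      .iInter fun j => .iInter fun _ => measurableSet_le (hobj j) (hobj k')
  refine measurable_to_countable' fun k => ?_
  convert (hge k).diff (hge (k + 1)) using 1
  ext v
  simp only [Set.mem_preimage, Set.mem_singleton_iff, Set.mem_sdiff, Set.mem_ofPred_eq]
  omega

lemma measurableSet_boundaryEvent (α : ℝ) (i : Fin m) : MeasurableSet (boundaryEvent α i) :=
  (measurableSet_le measurable_const (measurable_slR α)).inter <|
    measurableSet_eq_fun (measurable_pi_apply i) <|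
      (measurable_from_prod_countable_left (f := fun p : (Fin m → ℝ) × ℕ => orderStat p.1 p.2)
        measurable_orderStat).comp
        (measurable_id.prodMk (measurable_slR α))

end Measurability

lemma volume_inter_Icc_of_threshold {E : Set ℝ} {a b K C : ℝ} (hab : a ≤ b)
    (hlow : ∀ t ∈ Ioo a b, C < K - t → t ∈ E) (hup : ∀ t ∈ Ioo a b, t ∈ E → C ≤ K - t) :
    volume (E ∩ Icc a b) = ENNReal.ofReal (max (K - a) C - max (K - b) C) := by
  have hval : max (K - a) C - max (K - b) C = max (min b (K - C) - a) 0 := by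
    simp only [max_def, min_def]; split_ifs <;> linarith
  rw [hval, ENNReal.ofReal_max, ENNReal.ofReal_zero, max_eq_left (by positivity)]
  refine le_antisymm ?_ ?_
  · calc volume (E ∩ Icc a b) ≤ volume (Icc a (min b (K - C)) ∪ {a, b}) := by
          refine measure_mono fun t ⟨htE, hta, htb⟩ => ?_
          rcases hta.eq_or_lt with rfl | hta
          · exact Or.inr (Or.inl rfl)
          rcases htb.eq_or_lt with rfl | htb
          · exact Or.inr (Or.inr rfl)
          have := hup t ⟨hta, htb⟩ htE
          exact Or.inl ⟨hta.le, le_min htb.le (by linarith)⟩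
      _ ≤ volume (Icc a (min b (K - C))) + volume ({a, b} : Set ℝ) := measure_union_le _ _
      _ = ENNReal.ofReal (min b (K - C) - a) := by
          rw [Real.volume_Icc, (Set.toFinite {a, b}).measure_zero, add_zero]
  · rw [← Real.volume_Ioo]
    refine measure_mono fun t ⟨hta, htc⟩ => ⟨hlow t ⟨hta, htc.trans_le (min_le_left _ _)⟩ ?_,
      hta.le, htc.le.trans (min_le_left _ _)⟩
    linarith [htc.trans_le (min_le_right _ _)]

section Slot

open Function

variable {m : ℕ} {x : Fin m → ℝ} {i : Fin m}

-- Inserting `1` at `i` lists the order statistics of the other coordinates, followed by `1`.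
def slot (x : Fin m → ℝ) (i : Fin m) (r : ℕ) : Set ℝ :=
  Icc (orderStat (update x i 1) r) (orderStat (update x i 1) (r + 1))

lemma measurableSet_slot (x : Fin m → ℝ) (i : Fin m) (r : ℕ) : MeasurableSet (slot x i r) :=
  measurableSet_Icc

lemma orderStat_update_mem_Icc (hx : ∀ j ≠ i, x j ∈ Icc 0 1) {t : ℝ} (ht : t ∈ Icc 0 1)
    {k : ℕ} (hkm : k ≤ m) : orderStat (update x i t) k ∈ Icc 0 1 := by
  rcases Nat.eq_zero_or_pos k with rfl | hk
  · simp
  exact ⟨le_orderStat (fun j => (update_mem_Icc hx ht j).1) hk hkm,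
    orderStat_le (fun j => (update_mem_Icc hx ht j).2) hk hkm⟩

lemma orderStat_update_one_mono (hx : ∀ j ≠ i, x j ∈ Icc 0 1) {k k' : ℕ} (hkk' : k ≤ k')
    (hk' : k' ≤ m) : orderStat (update x i 1) k ≤ orderStat (update x i 1) k' := by
  rcases Nat.eq_zero_or_pos k with rfl | hk
  · simpa using (orderStat_update_mem_Icc hx ⟨zero_le_one, le_rfl⟩ hk').1
  exact orderStat_le_orderStat _ hk hkk' hk'

lemma orderStat_update_one_card (hx : ∀ j ≠ i, x j ∈ Icc 0 1) :
    orderStat (update x i 1) m = 1 :=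
  le_antisymm (orderStat_update_mem_Icc hx ⟨zero_le_one, le_rfl⟩ le_rfl).2
    (by simpa using le_orderStat_card (update x i 1) i)

lemma orderStat_update_zero_succ (hx : ∀ j ≠ i, x j ∈ Icc 0 1) {k : ℕ} (hkm : k < m) :
    orderStat (update x i 0) (k + 1) = orderStat (update x i 1) k := by
  rcases Nat.eq_zero_or_pos k with rfl | hk
  · exact le_antisymm (by simpa using orderStat_one_le (update x i 0) i)
      (by simpa using (orderStat_update_mem_Icc hx ⟨le_rfl, zero_le_one⟩ hkm).1)
  exact orderStat_update_succ x i zero_le_one hx hk hkm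

lemma slot_subset_Icc (hx : ∀ j ≠ i, x j ∈ Icc 0 1) {r : ℕ} (hr : r < m) :
    slot x i r ⊆ Icc 0 1 := fun _ ht =>
  ⟨(orderStat_update_mem_Icc hx ⟨zero_le_one, le_rfl⟩ hr.le).1.trans ht.1,
    ht.2.trans (orderStat_update_mem_Icc hx ⟨zero_le_one, le_rfl⟩ hr).2⟩

lemma orderStat_update_of_mem_slot (hx : ∀ j ≠ i, x j ∈ Icc 0 1) {r : ℕ} (hr : r < m) {t : ℝ}
    (ht : t ∈ slot x i r) {k : ℕ} (hkm : k ≤ m) :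
    orderStat (update x i t) k =
      if k ≤ r then orderStat (update x i 1) k
      else if k = r + 1 then t else orderStat (update x i 1) (k - 1) := by
  have hq : ∀ {k k'}, k ≤ k' → k' ≤ m → orderStat (update x i 1) k ≤ orderStat (update x i 1) k' :=
    orderStat_update_one_mono hx
  rcases Nat.eq_zero_or_pos k with rfl | hk
  · simp
  have ht01 := slot_subset_Icc hx hr ht
  rw [orderStat_update x i ht01.1 ht01.2 hk hkm, ← Nat.sub_add_cancel hk,
    orderStat_update_zero_succ hx (by omega), Nat.sub_add_cancel hk]
  split_ifs with hkr hkr'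
  · rw [min_eq_right ((hq hkr hr.le).trans ht.1), max_eq_right (hq (Nat.sub_le k 1) hkm)]
  · subst hkr'
    rw [min_eq_left ht.2, Nat.add_sub_cancel, max_eq_right ht.1]
  · exact max_eq_left ((min_le_left _ _).trans (ht.2.trans (hq (by omega) (by omega))))

lemma slMax_update_zero {α : ℝ} (hα0 : 0 ≤ α) (hα1 : α < 1) (hx : ∀ j ≠ i, x j ∈ Icc 0 1) :
    slMax α (update x i 0) = α / m + slMax α (update x i 1) := by
  have hshift : ∀ k < m, slObj α (update x i 0) (k + 1) = α / m + slObj α (update x i 1) k :=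
    fun k hk => by rw [slObj, slObj, orderStat_update_zero_succ hx hk]; push_cast; ring
  have hR1 : slR α (update x i 1) < m := by
    refine (slR_le α _).lt_of_ne fun hR => ?_
    have : slMax α (update x i 1) = α - 1 := by
      rw [slMax, hR, slObj, orderStat_update_one_card hx,
        mul_div_cancel_right₀ _ (Nat.cast_ne_zero.2 i.pos.ne')]
    linarith [slMax_nonneg α (update x i 1)]
  have hR0 := slR_le α (update x i 0)
  refine le_antisymm ?_ (hshift _ hR1 ▸ slObj_le_slMax α _ hR1)
  rcases Nat.eq_zero_or_pos (slR α (update x i 0)) with h0 | hpos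
  · rw [slMax, h0, slObj_zero]
    exact add_nonneg (by positivity) (slMax_nonneg α _)
  · obtain ⟨k, hk⟩ := Nat.exists_eq_add_of_le' hpos
    rw [slMax, hk, hshift k (by omega)]
    exact (add_le_add_iff_left _).2 (slObj_le_slMax α _ (by omega))

lemma mem_slot_of_mem_boundaryEvent {α t : ℝ} (hx : ∀ j ≠ i, x j ∈ Icc 0 1) (ht : t ∈ Icc 0 1)
    (hE : update x i t ∈ boundaryEvent α i) :
    1 ≤ slR α (update x i t) ∧ t ∈ slot x i (slR α (update x i t) - 1) := by
  obtain ⟨hR, hτ⟩ := hE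
  have hRm := slR_le α (update x i t)
  have hτ' : orderStat (update x i t) (slR α (update x i t)) = t := by
    rw [update_self] at hτ; exact hτ.symm
  refine ⟨hR, ?_, ?_⟩
  · rw [← orderStat_update_zero_succ hx (by omega), Nat.sub_add_cancel hR]
    exact (orderStat_mono (update_le_update_iff'.2 ht.1) hRm).trans_eq hτ'
  · rw [Nat.sub_add_cancel hR]
    exact hτ'.symm.trans_le (orderStat_mono (update_le_update_iff'.2 ht.2) hRm)

lemma volume_boundaryEvent_slice_inter_slot {α : ℝ} (hx : ∀ j ≠ i, x j ∈ Icc 0 1) {r : ℕ}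
    (hr : r < m) :
    volume (update x i ⁻¹' boundaryEvent α i ∩ slot x i r) =
      ENNReal.ofReal (slMax α (update x i (orderStat (update x i 1) r)) -
        slMax α (update x i (orderStat (update x i 1) (r + 1)))) := by
  set q := fun k => orderStat (update x i 1) k
  have hq : ∀ {k k'}, k ≤ k' → k' ≤ m → q k ≤ q k' := orderStat_update_one_mono hx
  have hab : q r ≤ q (r + 1) := hq (by omega) hr
  have hobj : ∀ t ∈ slot x i r, (∀ k ≤ m, k ≠ r + 1 →
      slObj α (update x i t) k = slObj α (update x i (q r)) k) ∧
      slObj α (update x i t) (r + 1) = α * (r + 1 : ℕ) / m - t := fun t ht => by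
    have hqr : q r ∈ slot x i r := ⟨le_rfl, hab⟩
    refine ⟨fun k hkm hk => ?_, ?_⟩
    · simp only [slObj, orderStat_update_of_mem_slot hx hr ht hkm,
        orderStat_update_of_mem_slot hx hr hqr hkm, if_neg hk]
    · simp [slObj, orderStat_update_of_mem_slot hx hr ht hr]
  obtain ⟨C, hC⟩ := exists_slR_threshold α r.succ_ne_zero hr (slObj α (update x i (q r)))
  have hCt : ∀ t ∈ slot x i r, slMax α (update x i t) = max (α * (r + 1 : ℕ) / m - t) C ∧
      (C < α * (r + 1 : ℕ) / m - t → slR α (update x i t) = r + 1) ∧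
      (slR α (update x i t) = r + 1 → C ≤ α * (r + 1 : ℕ) / m - t) := fun t ht => by
    simpa only [(hobj t ht).2] using hC _ (hobj t ht).1
  rw [(hCt _ ⟨le_rfl, hab⟩).1, (hCt _ ⟨hab, le_rfl⟩).1]
  refine volume_inter_Icc_of_threshold hab (fun t ht hlt => ?_) (fun t ht hE => ?_)
  · have ht' : t ∈ slot x i r := Ioo_subset_Icc_self ht
    have hR := (hCt t ht').2.1 hlt
    refine ⟨hR ▸ Nat.le_add_left 1 r, ?_⟩
    change update x i t i = orderStat (update x i t) (slR α (update x i t))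
    rw [update_self, hR, orderStat_update_of_mem_slot hx hr ht' hr, if_neg (by omega), if_pos rfl]
  · have ht' : t ∈ slot x i r := Ioo_subset_Icc_self ht
    obtain ⟨hR1, hk⟩ := mem_slot_of_mem_boundaryEvent hx (slot_subset_Icc hx hr ht') hE
    have hRm := slR_le α (update x i t)
    refine (hCt t ht').2.2 (le_antisymm ?_ ?_)
    · by_contra! h
      exact ht.2.not_ge ((hq (by omega) (by omega)).trans hk.1)
    · by_contra! h
      exact ht.1.not_ge (hk.2.trans (hq (by omega) hr.le))

lemma volume_boundaryEvent_slice {α : ℝ} (hα0 : 0 ≤ α) (hα1 : α < 1)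
    (hx : ∀ j ≠ i, x j ∈ Icc 0 1) :
    volume (update x i ⁻¹' boundaryEvent α i ∩ Icc 0 1) = ENNReal.ofReal (α / m) := by
  set E := update x i ⁻¹' boundaryEvent α i
  set q := fun k => orderStat (update x i 1) k
  have hcover : E ∩ Icc 0 1 = ⋃ r ∈ Finset.range m, E ∩ slot x i r := by
    ext t
    simp only [Set.mem_inter_iff, Set.mem_iUnion, Finset.mem_range]
    refine ⟨fun ⟨htE, ht⟩ => ?_, fun ⟨r, hr, htE, ht⟩ => ⟨htE, slot_subset_Icc hx hr ht⟩⟩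
    obtain ⟨hR, hslot⟩ := mem_slot_of_mem_boundaryEvent hx ht htE
    exact ⟨_, by have := slR_le α (update x i t); omega, htE, hslot⟩
  have hdisj : ∀ r s, r < s → s < m → volume ((E ∩ slot x i r) ∩ (E ∩ slot x i s)) = 0 :=
    fun r s hrs hs => measure_mono_null (fun t ⟨⟨_, _, htr⟩, ⟨_, hts, _⟩⟩ =>
      le_antisymm htr ((orderStat_update_one_mono hx hrs hs.le).trans hts))
        (measure_singleton (q (r + 1)))
  have hE : MeasurableSet E := measurable_update x (measurableSet_boundaryEvent α i)
  rw [hcover, measure_biUnion_finset₀ ?_ fun r _ =>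
      (hE.inter (measurableSet_slot x i r)).nullMeasurableSet,
    Finset.sum_congr rfl fun r hr => volume_boundaryEvent_slice_inter_slot hx
      (Finset.mem_range.1 hr),
    ← ENNReal.ofReal_sum_of_nonneg fun r hr => sub_nonneg.2 <| slMax_anti α <|
      update_le_update_iff'.2 (orderStat_update_one_mono hx r.le_succ (Finset.mem_range.1 hr)),
    Finset.sum_range_sub' (fun r => slMax α (update x i (q r))),
    show q 0 = 0 from orderStat_zero _, show q m = 1 from orderStat_update_one_card hx,
    slMax_update_zero hα0 hα1 hx, add_sub_cancel_right]
  intro r hr s hs hne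
  rcases lt_or_gt_of_ne hne with h | h
  · exact hdisj r s h (Finset.mem_range.1 hs)
  · exact AEDisjoint.symm (hdisj s r h (Finset.mem_range.1 hr))

end Slot

section ProductSlice

open Function
open scoped ENNReal

variable {ι : Type*} [Fintype ι] [DecidableEq ι] {X : ι → Type*} [∀ j, MeasurableSpace (X j)]
  (μ : ∀ j, Measure (X j)) [∀ j, IsProbabilityMeasure (μ j)]

lemma lintegral_pi_eq_lintegral_update {f : (∀ j, X j) → ℝ≥0∞} (hf : Measurable f) (i : ι) :
    ∫⁻ x, f x ∂Measure.pi μ = ∫⁻ x, ∫⁻ t, f (update x i t) ∂μ i ∂Measure.pi μ := by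
  have x₀ : ∀ j, X j := fun j => (nonempty_of_isProbabilityMeasure (μ j)).some
  have hidem : ∫⋯∫⁻_{i}, (∫⋯∫⁻_{i}, f ∂μ) ∂μ = ∫⋯∫⁻_{i}, f ∂μ := by
    ext x
    simp [lmarginal_singleton (∫⋯∫⁻_{i}, f ∂μ),
      lmarginal_update_of_mem μ (Finset.mem_singleton_self i)]
  have hsplit : (Finset.univ : Finset ι) = {i} ∪ Finset.univ.erase i := by simp
  have hdisj : Disjoint {i} (Finset.univ.erase i) :=
    Finset.disjoint_singleton_left.2 (Finset.notMem_erase i _)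
  rw [← lmarginal_singleton, lintegral_eq_lmarginal_univ x₀, lintegral_eq_lmarginal_univ x₀,
    hsplit, lmarginal_union' μ _ hf hdisj, lmarginal_union' μ _ (hf.lmarginal μ) hdisj, hidem]

lemma measure_pi_eq_lintegral_update {S : Set (∀ j, X j)} (hS : MeasurableSet S) (i : ι) :
    Measure.pi μ S = ∫⁻ x, μ i (update x i ⁻¹' S) ∂Measure.pi μ := by
  rw [← lintegral_indicator_one hS,
    lintegral_pi_eq_lintegral_update μ (measurable_one.indicator hS) i]
  congr 1 with x
  exact lintegral_indicator_one (measurable_update x hS)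

lemma measure_pi_setOf_eq_eq_zero {Y : Type*} [MeasurableSpace Y] [MeasurableEq Y]
    (ν : ι → Measure Y) [∀ j, IsProbabilityMeasure (ν j)] {i j : ι} (hij : i ≠ j)
    [NullSingletonClass (ν i)] :
    Measure.pi ν {x | x i = x j} = 0 := by
  rw [measure_pi_eq_lintegral_update ν (measurableSet_eq_fun (measurable_pi_apply i)
    (measurable_pi_apply j)) i]
  simp [update_of_ne hij.symm]

end ProductSlice

lemma measure_pi_boundaryEvent {m : ℕ} (ν : Fin m → Measure ℝ) [∀ j, IsProbabilityMeasure (ν j)]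
    (hν : ∀ j, ∀ᵐ t ∂ν j, t ∈ Icc (0 : ℝ) 1) {i : Fin m}
    (hi : ν i = (volume : Measure ℝ).restrict (Icc 0 1)) {α : ℝ} (hα0 : 0 ≤ α) (hα1 : α < 1) :
    Measure.pi ν (boundaryEvent α i) = ENNReal.ofReal (α / m) := by
  have hae : ∀ᵐ x ∂Measure.pi ν, ∀ j, x j ∈ Icc (0 : ℝ) 1 :=
    ae_all_iff.2 fun j => (Measure.quasiMeasurePreserving_eval ν j).ae (hν j)
  rw [measure_pi_eq_lintegral_update ν (measurableSet_boundaryEvent α i) i, hi,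
    lintegral_congr_ae (hae.mono fun x hx => by
      rw [Measure.restrict_apply' measurableSet_Icc,
        volume_boundaryEvent_slice hα0 hα1 fun j _ => hx j])]
  simp

theorem stmt8_general
    {Ω : Type} [MeasurableSpace Ω] (μ : Measure Ω) [IsProbabilityMeasure μ]
    (m : ℕ)
    (p : Fin m → Ω → ℝ) (hp : ∀ i, Measurable (p i))
    (hrange : ∀ i ω, p i ω ∈ Icc (0 : ℝ) 1)
    (hindep : iIndepFun p μ)
    (H0 : Finset (Fin m))
    (hnull : ∀ i ∈ H0, Measure.map (p i) μ = (volume : Measure ℝ).restrict (Icc 0 1))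
    (α : ℝ) (hα : α ∈ Ioo (0 : ℝ) 1) :
    (μ {ω | 1 ≤ slR α (fun i => p i ω) ∧
        ∃ i ∈ H0, p i ω = slTau α (fun i => p i ω)}).toReal
      = (H0.card : ℝ) / m * α := by
  set ν := fun i => μ.map (p i)
  have hν : ∀ j, ∀ᵐ t ∂ν j, t ∈ Icc (0 : ℝ) 1 := fun j =>
    (ae_map_iff (hp j).aemeasurable measurableSet_Icc).2 (ae_of_all _ (hrange j))
  have : ∀ j, IsProbabilityMeasure (ν j) := fun j =>
    Measure.isProbabilityMeasure_map (hp j).aemeasurable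
  have hevent : {ω | 1 ≤ slR α (fun i => p i ω) ∧ ∃ i ∈ H0, p i ω = slTau α (fun i => p i ω)} =
      (fun ω i => p i ω) ⁻¹' ⋃ i ∈ H0, boundaryEvent α i := by
    ext ω
    simp only [Set.mem_ofPred_eq, Set.mem_preimage, Set.mem_iUnion, boundaryEvent, exists_prop]
    tauto
  have hdisj :
      (H0 : Set (Fin m)).Pairwise (Function.onFun (AEDisjoint (Measure.pi ν)) (boundaryEvent α)) :=
    fun i hi j _ hij => by
      have : NullSingletonClass (ν i) := by rw [show ν i = _ from hnull i hi]; infer_instance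
      exact measure_mono_null (fun v ⟨⟨_, hvi⟩, ⟨_, hvj⟩⟩ => hvi.trans hvj.symm)
        (measure_pi_setOf_eq_eq_zero ν hij)
  rw [hevent, ← Measure.map_apply (measurable_pi_lambda _ hp)
      (Finset.measurableSet_biUnion H0 fun i _ => measurableSet_boundaryEvent α i),
    hindep.map_fun_eq_pi_map fun i => (hp i).aemeasurable,
    measure_biUnion_finset₀ hdisj fun i _ => (measurableSet_boundaryEvent α i).nullMeasurableSet,
    Finset.sum_congr rfl fun i hi => measure_pi_boundaryEvent ν hν (hnull i hi) hα.1.le hα.2,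
    Finset.sum_const, nsmul_eq_mul, ENNReal.toReal_mul, ENNReal.toReal_natCast,
    ENNReal.toReal_ofReal (div_nonneg hα.1.le m.cast_nonneg)]
  ring

/-- Exact boundary FDR of the support-line procedure.  For independent
p-values in `[0,1]` with atomless distributions, the true nulls being `Uniform(0,1)`,
the probability that at least one rejection is made and that the boundary rejection
(the largest rejected p-value) belongs to a true null is exactly `(m₀/m) α`. -/
theorem stmt8
    {Ω : Type} [MeasurableSpace Ω] (μ : Measure Ω) [IsProbabilityMeasure μ]
    (m : ℕ) (hm : 0 < m)
    (p : Fin m → Ω → ℝ) (hp : ∀ i, Measurable (p i))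
    (hrange : ∀ i ω, p i ω ∈ Icc (0 : ℝ) 1)
    (hindep : iIndepFun p μ)
    (hatomless : ∀ i (x : ℝ), μ {ω | p i ω = x} = 0)
    (H0 : Finset (Fin m))
    (hnull : ∀ i ∈ H0, Measure.map (p i) μ = (volume : Measure ℝ).restrict (Icc 0 1))
    (α : ℝ) (hα : α ∈ Ioo (0 : ℝ) 1) :
    (μ {ω | 1 ≤ slR α (fun i => p i ω) ∧
        ∃ i ∈ H0, p i ω = slTau α (fun i => p i ω)}).toReal
      = (H0.card : ℝ) / m * α :=
  stmt8_general μ m p hp hrange hindep H0 hnull α hα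
end

section
/- Let g_{θ_0} be a continuous, strictly positive probability density on R with finite mean μ_0 := ∫ z g_{θ_0}(z) dz, and for θ ∈ R with ∫ e^{(θ−θ_0)z} g_{θ_0}(z) dz < ∞ define the exponential-family density g_θ(z) := exp((θ−θ_0)z − A(θ)) g_{θ_0}(z), where A(θ) := log ∫ e^{(θ−θ_0)z} g_{θ_0}(z) dz, with cdfs G_θ. Let α* := 1 − G_{θ_0}(μ_0). Then for every θ ≤ θ_0, the density of the one-sided p-value p := 1 − G_{θ_0}(Z) when Z ~ g_θ, namely t ↦ (g_θ / g_{θ_0})(G_{θ_0}^{−1}(1 − t)), is bounded by 1 for all t ∈ (0, α*]. -/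
open MeasureTheory Filter Set

/-- In a one-parameter exponential family
`g_θ(z) = exp((θ−θ₀)z − A(θ)) g_{θ₀}(z)` with continuous positive base density
`g_{θ₀}`, the density of the one-sided p-value `p = 1 − G_{θ₀}(Z)` under any `θ ≤ θ₀`,
namely `t ↦ (g_θ/g_{θ₀})(G_{θ₀}^{−1}(1−t))`, is bounded by `1` on `(0, α*]`,
where `α* = 1 − G_{θ₀}(μ₀)` and `μ₀` is the mean of `g_{θ₀}`. -/
theorem stmt10
    (g0 : ℝ → ℝ) (hg0cont : Continuous g0) (hg0pos : ∀ z, 0 < g0 z)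
    (hg0pdf : ∫ z, g0 z = 1)
    (hmeanInt : Integrable (fun z => z * g0 z))
    (μ0 : ℝ) (hμ0 : μ0 = ∫ z, z * g0 z)
    (θ0 θ : ℝ) (hθ : θ ≤ θ0)
    (hint : Integrable (fun z => Real.exp ((θ - θ0) * z) * g0 z))
    (A : ℝ) (hA : A = Real.log (∫ z, Real.exp ((θ - θ0) * z) * g0 z))
    (gθ : ℝ → ℝ) (hgθ : ∀ z, gθ z = Real.exp ((θ - θ0) * z - A) * g0 z)
    (G0 : ℝ → ℝ) (hG0 : ∀ s, G0 s = ∫ z in Iic s, g0 z)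
    (G0inv : ℝ → ℝ) (hG0inv : ∀ u, G0inv u = sInf {x : ℝ | u ≤ G0 x})
    (αstar : ℝ) (hαstar : αstar = 1 - G0 μ0) :
    ∀ t : ℝ, 0 < t → t ≤ αstar →
      gθ (G0inv (1 - t)) / g0 (G0inv (1 - t)) ≤ 1 := by
  intro t ht htα
  have hg0int : Integrable g0 := by
    by_contra h
    rw [integral_undef h] at hg0pdf
    norm_num at hg0pdf
  set c := (θ - θ0) * μ0 with hc
  -- Jensen-type lower bound on the mgf
  have hI : Real.exp c ≤ ∫ z, Real.exp ((θ - θ0) * z) * g0 z := by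
    have hle : ∀ z, Real.exp c * (1 + ((θ - θ0) * z - c)) * g0 z
        ≤ Real.exp ((θ - θ0) * z) * g0 z := by
      intro z
      have h1 : Real.exp c * (1 + ((θ - θ0) * z - c)) ≤ Real.exp ((θ - θ0) * z) := by
        have h2 := Real.add_one_le_exp ((θ - θ0) * z - c)
        calc Real.exp c * (1 + ((θ - θ0) * z - c))
            ≤ Real.exp c * Real.exp ((θ - θ0) * z - c) := by
              nlinarith [Real.exp_pos c]
          _ = Real.exp ((θ - θ0) * z) := by rw [← Real.exp_add]; ring_nf
      exact mul_le_mul_of_nonneg_right h1 (hg0pos z).le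
    have heq : (fun z => Real.exp c * (1 + ((θ - θ0) * z - c)) * g0 z)
        = fun z => (Real.exp c * (1 - c)) * g0 z
          + (Real.exp c * (θ - θ0)) * (z * g0 z) := by
      funext z; ring
    have hLint : Integrable (fun z => Real.exp c * (1 + ((θ - θ0) * z - c)) * g0 z) := by
      rw [heq]; exact (hg0int.const_mul _).add (hmeanInt.const_mul _)
    have hmono := integral_mono hLint hint hle
    have hval : (∫ z, Real.exp c * (1 + ((θ - θ0) * z - c)) * g0 z) = Real.exp c := by
      rw [heq, integral_add (hg0int.const_mul _) (hmeanInt.const_mul _),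
        integral_const_mul, integral_const_mul, hg0pdf, ← hμ0, hc]
      ring
    linarith
  have hcA : c ≤ A := by
    rw [hA]
    exact (Real.le_log_iff_exp_le (lt_of_lt_of_le (Real.exp_pos c) hI)).2 hI
  -- G0 is strictly monotone
  have hG0mono : StrictMono G0 := by
    intro a b hab
    rw [hG0 a, hG0 b]
    have hsplit : ∫ z in Iic b, g0 z = (∫ z in Iic a, g0 z) + ∫ z in Ioc a b, g0 z := by
      rw [← setIntegral_union (Iic_disjoint_Ioc le_rfl) measurableSet_Ioc
        hg0int.integrableOn hg0int.integrableOn, Iic_union_Ioc_eq_Iic hab.le]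
    have hpos : 0 < ∫ z in Ioc a b, g0 z := by
      rw [← intervalIntegral.integral_of_le hab.le]
      exact intervalIntegral.intervalIntegral_pos_of_pos
        hg0int.intervalIntegrable (fun z => hg0pos z) hab
    linarith
  -- G0 tends to 1, so the set defining G0inv (1 - t) is nonempty
  have hunion : (⋃ n : ℕ, Iic (n : ℝ)) = univ := by
    ext x
    simpa using exists_nat_ge x
  have htend : Tendsto (fun n : ℕ => G0 n) atTop (nhds 1) := by
    have h := tendsto_setIntegral_of_monotone (f := g0) (μ := volume)
      (s := fun n : ℕ => Iic (n : ℝ)) (fun n => measurableSet_Iic)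
      (fun m n hmn => Iic_subset_Iic.2 (by exact_mod_cast hmn))
      (by rw [hunion]; exact hg0int.integrableOn)
    rw [hunion] at h
    simpa [hG0, hg0pdf] using h
  have hSne : {x : ℝ | 1 - t ≤ G0 x}.Nonempty := by
    have hev : ∀ᶠ n : ℕ in atTop, 1 - t < G0 n :=
      htend.eventually (eventually_gt_nhds (by linarith))
    obtain ⟨n, hn⟩ := hev.exists
    exact ⟨(n : ℝ), hn.le⟩
  have hG0μ0 : G0 μ0 ≤ 1 - t := by rw [hαstar] at htα; linarith
  have hxμ0 : μ0 ≤ G0inv (1 - t) := by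
    rw [hG0inv]
    refine le_csInf hSne fun y hy => ?_
    by_contra hlt
    push_neg at hlt
    have := hG0mono hlt
    have : (1 : ℝ) - t ≤ G0 y := hy
    linarith [hG0mono hlt]
  set x := G0inv (1 - t)
  rw [hgθ x, mul_div_assoc, div_self (hg0pos x).ne', mul_one, Real.exp_le_one_iff]
  have hmul : (θ - θ0) * x ≤ c := by
    rw [hc]
    exact mul_le_mul_of_nonpos_left hxμ0 (by linarith)
  linarith
end

section
/- Fix m ≥ 1 and α ∈ [0,1]. Let p_1,...,p_m be independent random variables all supported on the grid {1/L, 2/L, ..., (L−1)/L, 1}, with p_i ~ Uniform{1/L,...,L/L} whenever the i-th null is true, and let m_0 be the number of true nulls, π̄_0 := m_0/m. Let R_α := argmax_{k ∈ {0,...,m}} (αk/m − p_(k)) (p_(0) := 0), with ties in the ordering of equal p-values broken uniformly at random, and let bFDR(R_α) be the probability that R_α ≥ 1 and the p-value of rank R_α belongs to a true null. Then there exist a constant C and a threshold L_0 (depending only on m and α) such that for all L ≥ L_0 and all choices of the non-null distributions on the grid, bFDR(R_α) ≤ π̄_0 α + C m²/L; i.e., bFDR(R_α) ≤ π̄_0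 α + O(m²/L) as L → ∞. -/
/-! For a true null `i`, fix the other p-values `v` and let `p_i = t` run over the grid. Whenever
`i` is then the boundary rejection, the support line through `(c t + 1, t)`, with
`c t = #{j ≠ i | v j ≤ t}`, lies above every point `(k, p_(k))`; comparing two such positions
`s ≤ t` gives `α (c t - c s) / m ≤ t - s ≤ α (c t - c s + 1) / m`. Hence the integer
`n + c - ⌈(α L / m) c⌉` strictly increases along the grid indices `n` at which `i` is the boundary,
so there are at most `α L / m + m + 1` of them. As `p_i` is uniform on the grid and independent
of `v`, `i` is the boundary with probability at most `α / m + (m + 1) / L`; summing over the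
`m₀` true nulls gives `π̄₀ α + 2 m² / L`. -/
open MeasureTheory ProbabilityTheory Filter Set

/-- The boundary FDR of the support-line procedure with ties among equal p-values
broken uniformly at random: the probability that at least one rejection is made and
the boundary rejection is a true null, i.e. the expectation of
`1{R_α ≥ 1} · #{nulls at the threshold} / #{p-values at the threshold}`. -/
noncomputable def bFDRsl {Ω : Type} [MeasurableSpace Ω] (μ : Measure Ω)
    {m : ℕ} (p : Fin m → Ω → ℝ) (H0 : Finset (Fin m)) (α : ℝ) : ℝ :=
  ∫ ω, (if 1 ≤ slR α (fun i => p i ω) then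
      ({i : Fin m | i ∈ H0 ∧ p i ω = slTau α (fun i => p i ω)}.ncard : ℝ)
        / ({i : Fin m | p i ω = slTau α (fun i => p i ω)}.ncard : ℝ)
    else 0) ∂μ

theorem Finset.card_le_of_strictMonoOn {α : Type*} [LinearOrder α] {s : Finset α}
    (hs : s.Nonempty) {f : α → ℤ} (hf : StrictMonoOn f s) :
    (s.card : ℤ) ≤ f (s.max' hs) - f (s.min' hs) + 1 := by
  have hmaps : Set.MapsTo f s (Finset.Icc (f (s.min' hs)) (f (s.max' hs))) := fun a ha =>
    Finset.mem_Icc.2 ⟨hf.monotoneOn (s.min'_mem hs) ha (s.min'_le a ha),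
      hf.monotoneOn ha (s.max'_mem hs) (s.le_max' a ha)⟩
  have := Finset.card_le_card_of_injOn f hmaps hf.injOn
  have hle := hf.monotoneOn (s.min'_mem hs) (s.max'_mem hs) (s.min'_le _ (s.max'_mem hs))
  rw [Int.card_Icc] at this
  omega

theorem card_le_of_gap_bounds {s : Finset ℕ} {c : ℕ → ℕ} {β : ℝ} {M : ℕ} (hβ : 0 ≤ β)
    (hc : MonotoneOn c s) (hcM : ∀ a ∈ s, c a < M)
    (hgap : ∀ a ∈ s, ∀ b ∈ s, a ≤ b →
      β * ((c b : ℝ) - c a) ≤ (b : ℝ) - a ∧ (b : ℝ) - a ≤ β * ((c b : ℝ) - c a + 1)) :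
    (s.card : ℝ) ≤ β + M + 1 := by
  rcases s.eq_empty_or_nonempty with rfl | hs
  · simp only [Finset.card_empty, Nat.cast_zero]
    positivity
  -- the ceiling makes `a + c a - β c a` integer-valued while keeping it strictly increasing
  set h : ℕ → ℤ := fun a => a + c a - ⌈β * c a⌉
  have hmono : StrictMonoOn h s := by
    intro a ha b hb hab
    rcases (hc ha hb hab.le).eq_or_lt with hcab | hcab
    · simp only [h, hcab]
      omega
    have hceil : ⌈β * ((c b : ℝ) - c a)⌉ ≤ (b : ℤ) - a := by
      rw [Int.ceil_le]
      push_cast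
      exact (hgap a ha b hb hab.le).1
    have hsub : ⌈β * c b⌉ ≤ ⌈β * c a⌉ + ⌈β * ((c b : ℝ) - c a)⌉ := by
      rw [show β * (c b : ℝ) = β * c a + β * ((c b : ℝ) - c a) by ring]
      exact Int.ceil_add_le _ _
    simp only [h]
    omega
  set a₀ := s.min' hs
  set a₁ := s.max' hs
  have hcard : (s.card : ℝ) ≤ h a₁ - h a₀ + 1 := by
    exact_mod_cast Finset.card_le_of_strictMonoOn hs hmono
  have hup := (hgap a₀ (s.min'_mem hs) a₁ (s.max'_mem hs) (s.min'_le _ (s.max'_mem hs))).2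
  have hc₁ : (c a₁ : ℝ) + 1 ≤ M := by exact_mod_cast hcM a₁ (s.max'_mem hs)
  have hceil₁ := Int.le_ceil (β * c a₁)
  have hceil₀ := Int.ceil_lt_add_one (β * c a₀)
  simp only [h] at hcard
  push_cast at hcard
  nlinarith [(Nat.cast_nonneg (c a₀) : (0 : ℝ) ≤ c a₀)]

section GridIntegral

variable {Ω ι κ β : Type*} [MeasurableSpace Ω] [Fintype κ]
  [MeasurableSpace β] {μ : Measure Ω}

/-- No measurability of `f` is needed, which matters since `slR` is defined through `sSup`. -/
theorem integral_comp_eq_sum_atoms [Fintype ι] [DecidableEq ι] [MeasurableSingletonClass β]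
    [IsFiniteMeasure μ] {X : ι → Ω → β}
    (hX : ∀ j, Measurable (X j)) {g : κ → β} (hg : Function.Injective g)
    (hXg : ∀ j ω, X j ω ∈ range g) (f : (ι → β) → ℝ) :
    ∫ ω, f (fun j => X j ω) ∂μ
      = ∑ ν : ι → κ, f (g ∘ ν) * μ.real (⋂ j, X j ⁻¹' {g (ν j)}) := by
  have hmeas : ∀ ν : ι → κ, MeasurableSet (⋂ j, X j ⁻¹' {g (ν j)}) := fun ν =>
    MeasurableSet.iInter fun j => hX j (measurableSet_singleton _)
  have hsplit : (fun ω => f (fun j => X j ω))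
      = fun ω => ∑ ν : ι → κ, (⋂ j, X j ⁻¹' {g (ν j)}).indicator (fun _ => f (g ∘ ν)) ω := by
    funext ω
    choose ν₀ hν₀ using fun j => hXg j ω
    have hmem : ∀ ν : ι → κ, ω ∈ ⋂ j, X j ⁻¹' {g (ν j)} ↔ ν = ν₀ := fun ν => by
      simp only [mem_iInter, mem_preimage, mem_singleton_iff, ← hν₀, hg.eq_iff, funext_iff,
        eq_comm]
    rw [Finset.sum_eq_single ν₀ (fun ν _ hν => indicator_of_notMem (mt (hmem ν).1 hν) _)
      (by simp), indicator_of_mem ((hmem ν₀).2 rfl)]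
    exact congrArg f (funext fun j => (hν₀ j).symm)
  rw [hsplit, integral_finsetSum _ fun ν _ => (integrable_const _).indicator (hmeas ν)]
  exact Finset.sum_congr rfl fun ν _ => by
    rw [integral_indicator_const _ (hmeas ν), smul_eq_mul, mul_comm]

theorem ProbabilityTheory.iIndepFun.measureReal_iInter_preimage [Fintype ι] {X : ι → Ω → β}
    (h : iIndepFun X μ) {S : ι → Set β} (hS : ∀ j, MeasurableSet (S j)) :
    μ.real (⋂ j, X j ⁻¹' S j) = ∏ j, μ.real (X j ⁻¹' S j) := by
  have := h.measure_inter_preimage_eq_mul Finset.univ (sets := S) fun j _ => hS j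
  simp only [Finset.mem_univ, iInter_true] at this
  rw [measureReal_def, this, ENNReal.toReal_prod]
  rfl

theorem sum_measureReal_preimage_eq_one [MeasurableSingletonClass β] [IsProbabilityMeasure μ]
    {Y : Ω → β} (hY : Measurable Y) {g : κ → β} (hg : Function.Injective g)
    (hYg : ∀ ω, Y ω ∈ range g) :
    ∑ a, μ.real (Y ⁻¹' {g a}) = 1 := by
  classical
  have hcover : Y ⁻¹' ↑(Finset.univ.image g) = univ := by
    ext ω
    simpa using hYg ω
  rw [← Finset.sum_image (f := fun b => μ.real (Y ⁻¹' {b})) fun a _ b _ hab => hg hab,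
    sum_measureReal_preimage_singleton _ fun b _ => hY (measurableSet_singleton b), hcover,
    probReal_univ]

end GridIntegral

theorem sum_mul_prod_le_of_const {ι κ : Type*} [Fintype ι] [DecidableEq ι] [Fintype κ]
    {w : ι → κ → ℝ} (hw0 : ∀ j a, 0 ≤ w j a) (hw1 : ∀ j, ∑ a, w j a = 1) {i : ι} {c : ℝ}
    (hwi : ∀ a, w i a = c) {F : (ι → κ) → ℝ} {B : ℝ}
    (hF : ∀ ν, ∑ a, F (Function.update ν i a) ≤ B) :
    ∑ ν, F ν * ∏ j, w j (ν j) ≤ c * B := by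
  obtain ⟨a₀⟩ : Nonempty κ := by
    by_contra h
    simpa [not_nonempty_iff.1 h] using hw1 i
  set e := (Equiv.funSplitAt i κ).symm
  have he : ∀ a g, e (a, g) = Function.update (e (a₀, g)) i a := fun a g => by
    funext j
    by_cases hj : j = i
    · subst hj; simp [e, Equiv.funSplitAt_symm_apply]
    · simp [e, Equiv.funSplitAt_symm_apply, hj]
  have hprod : ∀ a g, ∏ j, w j (e (a, g) j) = c * ∏ j : {j // j ≠ i}, w j (g j) := fun a g => by
    rw [Fintype.prod_eq_mul_prod_subtype_ne _ i]
    simp only [e, Equiv.funSplitAt_symm_apply, dif_pos, hwi]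
    congr 1
    exact Finset.prod_congr rfl fun j _ => by simp [j.2]
  have hP : ∑ g : {j // j ≠ i} → κ, ∏ j : {j // j ≠ i}, w j (g j) = 1 := by
    rw [← Fintype.prod_sum]
    exact Finset.prod_eq_one fun j _ => hw1 j
  calc ∑ ν, F ν * ∏ j, w j (ν j)
      = ∑ g : {j // j ≠ i} → κ, c * (∏ j : {j // j ≠ i}, w j (g j)) * ∑ a, F (e (a, g)) := by
        rw [← e.sum_comp, Fintype.sum_prod_type, Finset.sum_comm]
        simp only [hprod, Finset.mul_sum]
        exact Finset.sum_congr rfl fun g _ => Finset.sum_congr rfl fun a _ => by ring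
    _ ≤ ∑ g : {j // j ≠ i} → κ, c * (∏ j : {j // j ≠ i}, w j (g j)) * B := by
        gcongr with g
        · exact mul_nonneg (hwi a₀ ▸ hw0 i a₀) (Finset.prod_nonneg fun j _ => hw0 j _)
        · simpa only [← he] using hF (e (a₀, g))
    _ = c * B := by rw [← Finset.sum_mul, ← Finset.mul_sum, hP, mul_one]

namespace SupportLine

variable {m : ℕ}

noncomputable def countLE (v : Fin m → ℝ) (y : ℝ) : ℕ :=
  (Finset.univ.filter fun j => v j ≤ y).card

lemma countLE_mono (v : Fin m → ℝ) {y z : ℝ} (h : y ≤ z) : countLE v y ≤ countLE v z :=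
  Finset.card_le_card fun _ hj => by
    simp only [Finset.mem_filter, Finset.mem_univ, true_and] at hj ⊢
    exact hj.trans h

lemma exists_countLE_eq {v : Fin m → ℝ} {y : ℝ} (h : 0 < countLE v y) :
    ∃ j, v j ≤ y ∧ countLE v (v j) = countLE v y := by
  obtain ⟨j, hj, hmax⟩ := Finset.exists_max_image _ v (Finset.card_pos.1 h)
  simp only [Finset.mem_filter, Finset.mem_univ, true_and] at hj hmax
  refine ⟨j, hj, (countLE_mono v hj).antisymm (Finset.card_le_card fun k hk => ?_)⟩
  simp only [Finset.mem_filter, Finset.mem_univ, true_and] at hk ⊢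
  exact hmax k hk

lemma orderStat_le {v : Fin m → ℝ} {k : ℕ} {y : ℝ} (hk : k ≤ countLE v y) (hy : 0 ≤ y) :
    orderStat v k ≤ y := by
  unfold orderStat
  split_ifs with hk0
  · exact hy
  refine csInf_le ⟨-∑ j, |v j|, fun x hx => ?_⟩ hk
  obtain ⟨j, hj, -⟩ := exists_countLE_eq (v := v) (y := x)
    (by change k ≤ countLE v x at hx; omega)
  have := Finset.single_le_sum (fun j _ => abs_nonneg (v j)) (Finset.mem_univ j)
  linarith [neg_abs_le (v j)]

/-- The infimum defining `orderStat v k` is attained, at the smallest `v j` with at least `k`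
values below it. -/
lemma le_countLE_orderStat (v : Fin m → ℝ) {k : ℕ} (hk : k ≤ m) :
    k ≤ countLE v (orderStat v k) := by
  rcases Nat.eq_zero_or_pos k with rfl | hk0
  · exact Nat.zero_le _
  have : Nonempty (Fin m) := ⟨⟨0, by omega⟩⟩
  obtain ⟨jmax, hjmax⟩ := Finite.exists_max v
  have hT : (Finset.univ.filter fun j => k ≤ countLE v (v j)).Nonempty := by
    refine ⟨jmax, Finset.mem_filter.2 ⟨Finset.mem_univ _, ?_⟩⟩
    rwa [countLE, Finset.filter_true_of_mem fun j _ => hjmax j, Finset.card_univ,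
      Fintype.card_fin]
  obtain ⟨j₀, hj₀, hmin⟩ := Finset.exists_min_image _ v hT
  simp only [Finset.mem_filter, Finset.mem_univ, true_and] at hj₀ hmin
  have hleast : IsLeast {x : ℝ | k ≤ countLE v x} (v j₀) := by
    refine ⟨hj₀, fun y (hy : k ≤ countLE v y) => ?_⟩
    obtain ⟨j, hjy, hj⟩ := exists_countLE_eq (v := v) (y := y) (by omega)
    exact (hmin j (hj ▸ hy)).trans hjy
  have horder : orderStat v k = v j₀ := by
    rw [orderStat, if_neg hk0.ne']
    exact hleast.csInf_eq
  rw [horder]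
  exact hj₀

lemma slR_spec (α : ℝ) (v : Fin m → ℝ) :
    slR α v ≤ m ∧ ∀ j ≤ m, slObj α v j ≤ slObj α v (slR α v) := by
  obtain ⟨k, hk, hmax⟩ := Finset.exists_max_image (Finset.range (m + 1)) (slObj α v)
    ⟨0, by simp⟩
  have hne : {k : ℕ | k ≤ m ∧ ∀ j ≤ m, slObj α v j ≤ slObj α v k}.Nonempty :=
    ⟨k, Nat.lt_succ_iff.1 (Finset.mem_range.1 hk),
      fun j hj => hmax j (Finset.mem_range.2 (Nat.lt_succ_of_le hj))⟩
  exact Nat.sSup_mem hne ⟨m, fun _ hx => hx.1⟩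

/-- Coordinate `i` carries the boundary rejection `p_(R_α)` (before tie-breaking). -/
def IsBoundary (α : ℝ) (w : Fin m → ℝ) (i : Fin m) : Prop :=
  1 ≤ slR α w ∧ w i = slTau α w

noncomputable instance (α : ℝ) (w : Fin m → ℝ) (i : Fin m) : Decidable (IsBoundary α w i) :=
  inferInstanceAs (Decidable (_ ∧ _))

lemma slObj_le_of_isBoundary {α : ℝ} (hα : 0 ≤ α) {w : Fin m → ℝ} {i : Fin m}
    (h : IsBoundary α w i) {k : ℕ} (hk : k ≤ m) :
    slObj α w k ≤ α * countLE w (w i) / m - w i := by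
  obtain ⟨hRm, hmax⟩ := slR_spec α w
  have hτ : orderStat w (slR α w) = w i := h.2.symm
  have hR : slR α w ≤ countLE w (w i) := hτ ▸ le_countLE_orderStat w hRm
  calc slObj α w k ≤ α * slR α w / m - w i := by
        simpa only [slObj, hτ] using hmax k hk
    _ ≤ α * countLE w (w i) / m - w i := by gcongr

noncomputable def countOffLE (v : Fin m → ℝ) (i : Fin m) (y : ℝ) : ℕ :=
  (Finset.univ.filter fun j => j ≠ i ∧ v j ≤ y).card

lemma countOffLE_mono (v : Fin m → ℝ) (i : Fin m) {y z : ℝ} (h : y ≤ z) :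
    countOffLE v i y ≤ countOffLE v i z :=
  Finset.card_le_card fun _ hj => by
    simp only [Finset.mem_filter, Finset.mem_univ, true_and] at hj ⊢
    exact ⟨hj.1, hj.2.trans h⟩

lemma countOffLE_lt (v : Fin m → ℝ) (i : Fin m) (y : ℝ) : countOffLE v i y < m := by
  calc countOffLE v i y ≤ (Finset.univ.erase i).card :=
        Finset.card_le_card fun j hj => Finset.mem_erase.2 ⟨(Finset.mem_filter.1 hj).2.1,
          Finset.mem_univ j⟩
    _ < m := by simpa using i.pos

lemma countOffLE_le_countLE_update (v : Fin m → ℝ) (i : Fin m) (x y : ℝ) :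
    countOffLE v i y ≤ countLE (Function.update v i x) y :=
  Finset.card_le_card fun j hj => by
    simp only [Finset.mem_filter, Finset.mem_univ, true_and] at hj ⊢
    rw [Function.update_of_ne hj.1]
    exact hj.2

lemma countLE_update_of_le (v : Fin m → ℝ) (i : Fin m) {x y : ℝ} (hxy : x ≤ y) :
    countLE (Function.update v i x) y = countOffLE v i y + 1 := by
  have : (Finset.univ.filter fun j => Function.update v i x j ≤ y)
      = insert i (Finset.univ.filter fun j => j ≠ i ∧ v j ≤ y) := by
    ext j
    by_cases hj : j = i
    · subst hj; simp [hxy]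
    · simp [hj]
  rw [countLE, this, Finset.card_insert_of_notMem (by simp), countOffLE]

/-- If moving coordinate `i` to `t` makes it the boundary, the support line through
`(c + 1, t)`, `c` the number of other values `≤ t`, dominates every point `(k, y)` of the
empirical distribution. -/
lemma isBoundary_update_le {α : ℝ} (hα : 0 ≤ α) {v : Fin m → ℝ} {i : Fin m} {t : ℝ}
    (h : IsBoundary α (Function.update v i t) i) {k : ℕ} {y : ℝ} (hk : k ≤ m)
    (hky : k ≤ countLE (Function.update v i t) y) (hy : 0 ≤ y) :
    α * k / m - y ≤ α * (countOffLE v i t + 1 : ℕ) / m - t := by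
  have hobj := slObj_le_of_isBoundary hα h hk
  rw [Function.update_self, countLE_update_of_le v i le_rfl] at hobj
  have := orderStat_le hky hy
  rw [slObj] at hobj
  linarith

lemma isBoundary_update_gap {α : ℝ} (hα : 0 ≤ α) {v : Fin m → ℝ} {i : Fin m} {s t : ℝ}
    (hs : 0 ≤ s) (hst : s ≤ t) (hbs : IsBoundary α (Function.update v i s) i)
    (hbt : IsBoundary α (Function.update v i t) i) :
    α * ((countOffLE v i t : ℝ) - countOffLE v i s) / m ≤ t - s ∧
      t - s ≤ α * ((countOffLE v i t : ℝ) - countOffLE v i s + 1) / m := by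
  constructor
  · have := isBoundary_update_le hα hbs (countOffLE_lt v i t)
      (countLE_update_of_le v i hst).ge (hs.trans hst)
    push_cast at this
    linarith [show α * ((countOffLE v i t : ℝ) - countOffLE v i s) / m
      = α * (countOffLE v i t + 1 : ℝ) / m - α * (countOffLE v i s + 1 : ℝ) / m by ring]
  · have := isBoundary_update_le hα hbt (countOffLE_lt v i s).le
      (countOffLE_le_countLE_update v i t s) hs
    push_cast at this
    linarith [show α * ((countOffLE v i t : ℝ) - countOffLE v i s + 1) / m
      = α * (countOffLE v i t + 1 : ℝ) / m - α * (countOffLE v i s : ℝ) / m by ring]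

noncomputable def gridPt (L n : ℕ) : ℝ := (n + 1 : ℝ) / L

lemma gridPt_eq_div (L n : ℕ) : gridPt L n = ((n + 1 : ℕ) : ℝ) / L := by
  rw [gridPt, Nat.cast_succ]

lemma gridPt_injective (L : ℕ) : Function.Injective fun a : Fin L => gridPt L a := fun a b hab => by
  simpa [gridPt, Fin.val_inj, Nat.cast_ne_zero.2 a.pos.ne'] using hab

theorem card_isBoundary_gridPt_le {α : ℝ} (hα : 0 ≤ α) (L : ℕ) (v : Fin m → ℝ) (i : Fin m) :
    (((Finset.range L).filter
        fun n => IsBoundary α (Function.update v i (gridPt L n)) i).card : ℝ)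
      ≤ α * L / m + m + 1 := by
  refine card_le_of_gap_bounds (c := fun n => countOffLE v i (gridPt L n)) (by positivity)
    (fun a _ b _ hab => countOffLE_mono v i ?_) (fun a _ => countOffLE_lt v i _) ?_
  · unfold gridPt
    gcongr
  intro a ha b hb hab
  simp only [Finset.mem_filter, Finset.mem_range] at ha hb
  have hL : (0 : ℝ) < L := by exact_mod_cast (Nat.zero_lt_of_lt ha.1)
  have hab' : (a : ℝ) ≤ b := by exact_mod_cast hab
  have hgap := isBoundary_update_gap hα (by unfold gridPt; positivity)
    (by unfold gridPt; gcongr) ha.2 hb.2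
  have hdiff : gridPt L b - gridPt L a = ((b : ℝ) - a) / L := by unfold gridPt; ring
  rw [hdiff, le_div_iff₀ hL, div_le_iff₀ hL] at hgap
  constructor
  · calc α * L / m * (_ - _) = α * (_ - _) / m * L := by ring
      _ ≤ _ := hgap.1
  · calc ((b : ℝ) - a) ≤ α * (_ - _ + 1) / m * L := hgap.2
      _ = _ := by ring

/-- The probability, under uniform tie-breaking, that coordinate `i` is the boundary
rejection. -/
noncomputable def boundaryShare (α : ℝ) (i : Fin m) (w : Fin m → ℝ) : ℝ :=
  if IsBoundary α w i then ({j | w j = slTau α w}.ncard : ℝ)⁻¹ else 0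

lemma boundaryShare_le (α : ℝ) (i : Fin m) (w : Fin m → ℝ) :
    boundaryShare α i w ≤ if IsBoundary α w i then 1 else 0 := by
  unfold boundaryShare
  split_ifs with h
  · exact inv_le_one_of_one_le₀ <| by
      exact_mod_cast (Set.ncard_pos (Set.toFinite _)).2 ⟨i, h.2⟩
  · exact le_rfl

lemma boundary_ratio_eq_sum_boundaryShare (α : ℝ) (H0 : Finset (Fin m)) (w : Fin m → ℝ) :
    (if 1 ≤ slR α w then
        ({i : Fin m | i ∈ H0 ∧ w i = slTau α w}.ncard : ℝ) / ({i | w i = slTau α w}.ncard : ℝ)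
      else 0) = ∑ i ∈ H0, boundaryShare α i w := by
  unfold boundaryShare IsBoundary
  split_ifs with hR
  · simp only [hR, true_and]
    rw [Finset.sum_ite, Finset.sum_const, Finset.sum_const_zero, add_zero, nsmul_eq_mul,
      div_eq_mul_inv, ← Set.ncard_coe_finset]
    congr 3
    ext j
    simp
  · simp [hR]

theorem sum_boundaryShare_update_gridPt_le {α : ℝ} (hα : 0 ≤ α) (L : ℕ) (v : Fin m → ℝ)
    (i : Fin m) :
    ∑ a : Fin L, boundaryShare α i (Function.update v i (gridPt L a)) ≤ α * L / m + m + 1 :=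
  calc ∑ a : Fin L, boundaryShare α i (Function.update v i (gridPt L a))
      ≤ ∑ n ∈ Finset.range L,
          if IsBoundary α (Function.update v i (gridPt L n)) i then 1 else 0 := by
        rw [← Fin.sum_univ_eq_sum_range]
        exact Finset.sum_le_sum fun a _ => boundaryShare_le α i _
    _ ≤ α * L / m + m + 1 := by
        rw [Finset.sum_boole]
        exact card_isBoundary_gridPt_le hα L v i

theorem bFDRsl_eq_sum_atoms {Ω : Type} {κ : Type*} [MeasurableSpace Ω] [Fintype κ] {μ : Measure Ω}
    [IsProbabilityMeasure μ] {p : Fin m → Ω → ℝ} (H0 : Finset (Fin m)) (α : ℝ)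
    (hmeas : ∀ j, Measurable (p j)) (hindep : iIndepFun p μ) {g : κ → ℝ}
    (hg : Function.Injective g) (hrange : ∀ j ω, p j ω ∈ range g) :
    bFDRsl μ p H0 α = ∑ ν : Fin m → κ,
      (∑ i ∈ H0, boundaryShare α i (g ∘ ν)) * ∏ j, μ.real (p j ⁻¹' {g (ν j)}) := by
  simp only [bFDRsl, boundary_ratio_eq_sum_boundaryShare]
  rw [integral_comp_eq_sum_atoms hmeas hg hrange fun v => ∑ i ∈ H0, boundaryShare α i v]
  simp only [hindep.measureReal_iInter_preimage fun _ => measurableSet_singleton _]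

end SupportLine

open SupportLine

/-- Discrete-uniform nulls.  For fixed `m` and `α`, there are `C` and `L₀`
(depending only on `m` and `α`) such that for every grid size `L ≥ L₀` and every model of
`m` independent p-values supported on the grid `{1/L, ..., L/L}` whose nulls are uniform
on the grid, the boundary FDR of the support-line procedure (ties broken uniformly at
random) is at most `π̄₀ α + C m²/L`. -/
theorem stmt11 (m : ℕ) (hm : 1 ≤ m) (α : ℝ) (hα : α ∈ Icc (0 : ℝ) 1) :
    ∃ C : ℝ, ∃ L0 : ℕ, ∀ L : ℕ, L0 ≤ L →
    ∀ (Ω : Type) [MeasurableSpace Ω] (μ : Measure Ω) [IsProbabilityMeasure μ]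
      (p : Fin m → Ω → ℝ) (H0 : Finset (Fin m)),
    (∀ i, Measurable (p i)) →
    (∀ i ω, ∃ ℓ : ℕ, 1 ≤ ℓ ∧ ℓ ≤ L ∧ p i ω = (ℓ : ℝ) / L) →
    iIndepFun p μ →
    (∀ i ∈ H0, ∀ ℓ : ℕ, 1 ≤ ℓ → ℓ ≤ L →
      μ {ω | p i ω = (ℓ : ℝ) / L} = (L : ENNReal)⁻¹) →
    bFDRsl μ p H0 α ≤ (H0.card : ℝ) / m * α + C * m ^ 2 / L := by
  refine ⟨2, 1, fun L hL Ω _ μ _ p H0 hmeas hgrid hindep hnull => ?_⟩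
  set g : Fin L → ℝ := fun a => gridPt L a
  have hrange : ∀ j ω, p j ω ∈ range g := fun j ω => by
    obtain ⟨ℓ, hℓ1, hℓL, hpℓ⟩ := hgrid j ω
    exact ⟨⟨ℓ - 1, by omega⟩, by simp only [g, gridPt_eq_div, Nat.sub_add_cancel hℓ1, hpℓ]⟩
  set w : Fin m → Fin L → ℝ := fun j a => μ.real (p j ⁻¹' {g a})
  have hwnull : ∀ i ∈ H0, ∀ a, w i a = (L : ℝ)⁻¹ := fun i hi a => by
    simp only [w, g, gridPt_eq_div, measureReal_def, preimage, mem_singleton_iff]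
    rw [hnull i hi (a + 1) (by omega) (by omega), ENNReal.toReal_inv, ENNReal.toReal_natCast]
  have hbound : ∀ i ∈ H0,
      ∑ ν : Fin m → Fin L, boundaryShare α i (g ∘ ν) * ∏ j, w j (ν j)
        ≤ (L : ℝ)⁻¹ * (α * L / m + m + 1) := fun i hi =>
    sum_mul_prod_le_of_const (fun _ _ => measureReal_nonneg)
      (fun j => sum_measureReal_preimage_eq_one (hmeas j) (gridPt_injective L) (hrange j))
      (hwnull i hi)
      fun ν => by
        simpa only [Function.comp_update] using
          sum_boundaryShare_update_gridPt_le hα.1 L (g ∘ ν) i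
  calc bFDRsl μ p H0 α
      = ∑ ν : Fin m → Fin L, (∑ i ∈ H0, boundaryShare α i (g ∘ ν)) * ∏ j, w j (ν j) :=
        bFDRsl_eq_sum_atoms H0 α hmeas hindep (gridPt_injective L) hrange
    _ = ∑ i ∈ H0, ∑ ν : Fin m → Fin L, boundaryShare α i (g ∘ ν) * ∏ j, w j (ν j) := by
        simp only [Finset.sum_mul]
        exact Finset.sum_comm
    _ ≤ H0.card * ((L : ℝ)⁻¹ * (α * L / m + m + 1)) := by
        simpa using Finset.sum_le_sum hbound
    _ ≤ (H0.card : ℝ) / m * α + 2 * m ^ 2 / L := by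
        have hL' : (1 : ℝ) ≤ L := by exact_mod_cast hL
        have hm' : (1 : ℝ) ≤ m := by exact_mod_cast hm
        have hH0 : (H0.card : ℝ) ≤ m := by exact_mod_cast card_finset_fin_le H0
        rw [show (H0.card : ℝ) * ((L : ℝ)⁻¹ * (α * L / m + m + 1))
          = H0.card / m * α + H0.card * (m + 1) / L by field_simp; ring]
        have : (H0.card : ℝ) * (m + 1) ≤ 2 * m ^ 2 := by nlinarith
        exact (add_le_add_iff_left _).2 (div_le_div_of_nonneg_right this (by positivity))
end

section
/- Fix L ≥ 1 and α ∈ (0,1). For each m, let p_1,...,p_m be independent random variables all supported on the grid {1/L,...,L/L}, with p_i ~ Uniform{1/L,...,L/L} whenever the i-th null is true; let m_0(m) be the number of true nulls. Suppose that as m → ∞ the average probability mass function f̄_m converges pointwise on the grid to a limiting pmf f*, that m_0(m)/m → π*_0 ∈ (0,1), and that the map ℓ ↦ α Σ_{k=0}^{ℓ} f*(k/L) − ℓ/L (with f*(0) := 0) has a unique maximizer ℓ* over ℓ ∈ {0,...,L}. Let R_α := argmax_{k ∈ {0,...,m}} (αk/m − p_(k)) with ties broken uniformly at random, and let bFDR(R_α)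 := P(R_α ≥ 1 and the p-value of rank R_α belongs to a true null). Then lim_{m→∞} bFDR(R_α) = (π*_0 / (L f*(ℓ*/L))) · 1{ℓ* > 0}. -/
/-!
On the grid, `p_(k) = ℓ / L` for every rank `k` in the block `(C(ℓ - 1), C(ℓ)]`, where `C(ℓ)`
counts the p-values at most `ℓ / L`. Hence the support-line objective is maximised at a block end,
and `R_α = C(ℓ̂)` as soon as `ℓ̂` is the unique maximiser of the empirical objective
`ℓ ↦ α C(ℓ) / m - ℓ / L`. By Chebyshev's inequality the empirical frequencies of the grid points
converge in probability to `f*`, and a strict maximiser is stable under small perturbations, so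
`ℓ̂ = ℓ*` with probability tending to one. On that event the bFDR integrand is
`#{nulls at ℓ*/L} / #{p-values at ℓ*/L}` (or `0` if `ℓ* = 0`), which converges in probability to
`(π₀* / L) / f*(ℓ*/L)`; being bounded, its expectation converges as well.
-/

open MeasureTheory ProbabilityTheory Filter Set

open scoped Topology ENNReal

section ConvergenceInMeasure

variable {Ω ι E : Type*} [MeasurableSpace Ω] {μ : Measure Ω}

theorem tendstoInMeasure_const_self [PseudoEMetricSpace E] {l : Filter ι} (g : Ω → E) :
    TendstoInMeasure μ (fun _ => g) l g := fun ε hε => by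
  simpa [not_le.2 hε] using tendsto_const_nhds

theorem TendstoInMeasure.congr_of_eqOn_compl [PseudoEMetricSpace E] {l : Filter ι}
    {f f' : ι → Ω → E} {g : Ω → E} {B : ι → Set Ω} (hf : TendstoInMeasure μ f l g)
    (hB : Tendsto (fun i => μ (B i)) l (𝓝 0)) (heq : ∀ᶠ i in l, ∀ ω ∉ B i, f' i ω = f i ω) :
    TendstoInMeasure μ f' l g := fun ε hε => by
  refine tendsto_of_tendsto_of_tendsto_of_le_of_le' tendsto_const_nhds
    (by simpa using (hf ε hε).add hB) (Eventually.of_forall fun _ => zero_le) ?_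
  filter_upwards [heq] with i hi
  refine (measure_mono fun ω hω => ?_).trans (measure_union_le _ _)
  by_cases hωB : ω ∈ B i
  · exact Or.inr hωB
  · exact Or.inl (by simpa [hi ω hωB] using hω)

theorem TendstoInMeasure.continuousAt_comp₂ {F G : Type*} [PseudoMetricSpace E]
    [PseudoMetricSpace F] [PseudoMetricSpace G] {l : Filter ι} {X : ι → Ω → E} {Y : ι → Ω → F}
    {a : E} {b : F} (hX : TendstoInMeasure μ X l fun _ => a)
    (hY : TendstoInMeasure μ Y l fun _ => b) {h : E × F → G} (hh : ContinuousAt h (a, b)) :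
    TendstoInMeasure μ (fun i ω => h (X i ω, Y i ω)) l fun _ => h (a, b) := by
  rw [tendstoInMeasure_iff_dist] at hX hY ⊢
  intro ε hε
  obtain ⟨δ, hδ, hcont⟩ := Metric.continuousAt_iff.1 hh ε hε
  refine tendsto_of_tendsto_of_tendsto_of_le_of_le tendsto_const_nhds
    (by simpa using (hX δ hδ).add (hY δ hδ)) (fun _ => zero_le) fun i => ?_
  refine (measure_mono fun ω hω => ?_).trans (measure_union_le _ _)
  by_contra hω'
  simp only [Set.mem_union, Set.mem_ofPred_eq, not_or, not_le] at hω hω'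
  exact (hcont (by rw [Prod.dist_eq]; exact max_lt hω'.1 hω'.2)).not_ge hω

theorem tendsto_measure_biUnion_finset {l : Filter ι} {κ : Type*} {S : Finset κ}
    {B : κ → ι → Set Ω} (hB : ∀ k ∈ S, Tendsto (fun i => μ (B k i)) l (𝓝 0)) :
    Tendsto (fun i => μ (⋃ k ∈ S, B k i)) l (𝓝 0) :=
  tendsto_of_tendsto_of_tendsto_of_le_of_le tendsto_const_nhds
    (by simpa using tendsto_finsetSum S hB) (fun _ => zero_le)
    fun _ => measure_biUnion_finset_le _ _

theorem tendsto_integral_of_tendstoInMeasure_of_norm_le [IsFiniteMeasure μ]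
    {f : ℕ → Ω → ℝ} {g : Ω → ℝ} {C : ℝ} (hf : ∀ n, AEStronglyMeasurable (f n) μ)
    (hC : ∀ n ω, ‖f n ω‖ ≤ C) (hg : Integrable g μ) (hfg : TendstoInMeasure μ f atTop g) :
    Tendsto (fun n => ∫ ω, f n ω ∂μ) atTop (𝓝 (∫ ω, g ω ∂μ)) := by
  have hui : UnifIntegrable f 1 μ := by
    refine unifIntegrable_of le_rfl ENNReal.one_ne_top hf fun ε _ =>
      ⟨⟨|C| + 1, by positivity⟩, fun n => ?_⟩
    have : {ω | ⟨|C| + 1, by positivity⟩ ≤ ‖f n ω‖₊}.indicator (f n) = 0 := by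
      ext ω
      refine Set.indicator_of_notMem (fun hω => ?_) _
      have h1 : |C| + 1 ≤ ‖f n ω‖ := by exact_mod_cast hω
      linarith [hC n ω, le_abs_self C]
    simp [this]
  have hL1 := tendsto_Lp_finite_of_tendstoInMeasure le_rfl ENNReal.one_ne_top hf
    (memLp_one_iff_integrable.2 hg) hui hfg
  refine tendsto_integral_of_L1 g hg.1
    (Eventually.of_forall fun n => (integrable_const C).mono' (hf n) (ae_of_all _ (hC n))) ?_
  simpa [eLpNorm_one_eq_lintegral_enorm] using hL1

end ConvergenceInMeasure

theorem Measurable.comp_of_forall_mem_finset {Ω β γ : Type*} [MeasurableSpace Ω]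
    [MeasurableSpace β] [MeasurableSingletonClass β] [MeasurableSpace γ] {f : Ω → β}
    (hf : Measurable f) {S : Finset β} (hS : ∀ ω, f ω ∈ S) (h : β → γ) :
    Measurable fun ω => h (f ω) :=
  (measurable_of_countable fun x : S => h x).comp (hf.subtype_mk (h := hS))

noncomputable def countEq {m : ℕ} (s : Finset (Fin m)) (v : Fin m → ℝ) (x : ℝ) : ℕ :=
  (s.filter fun i => v i = x).card

section WeakLaw

variable {Ω : Type*} [MeasurableSpace Ω] {μ : Measure Ω} [IsProbabilityMeasure μ]

theorem measure_le_abs_sum_sub_le {ι : Type*} {X : ι → Ω → ℝ} (hX : ∀ i, Measurable (X i))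
    (h01 : ∀ i ω, X i ω ∈ Icc 0 1) (hind : iIndepFun X μ) (s : Finset ι) {c : ℝ} (hc : 0 < c) :
    μ {ω | c ≤ |∑ i ∈ s, X i ω - ∑ i ∈ s, μ[X i]|} ≤ ENNReal.ofReal (s.card / c ^ 2) := by
  have hmem : ∀ i, MemLp (X i) 2 μ := fun i =>
    memLp_of_bounded (ae_of_all _ (h01 i)) (hX i).aestronglyMeasurable 2
  have hvar : variance (∑ i ∈ s, X i) μ ≤ s.card := by
    rw [IndepFun.variance_sum (fun i _ => hmem i) fun i _ j _ hij => hind.indepFun hij]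
    calc ∑ i ∈ s, variance (X i) μ ≤ ∑ _i ∈ s, (1 : ℝ) := Finset.sum_le_sum fun i _ =>
          (variance_le_sq_of_bounded (ae_of_all _ (h01 i)) (hX i).aemeasurable).trans
            (by norm_num)
      _ = s.card := by simp
  have hmean : μ[∑ i ∈ s, X i] = ∑ i ∈ s, μ[X i] := by
    simp only [Finset.sum_apply]
    exact integral_finsetSum s fun i _ => (hmem i).integrable one_le_two
  calc _ = μ {ω | c ≤ |(∑ i ∈ s, X i) ω - μ[∑ i ∈ s, X i]|} := by
        rw [hmean]; simp only [Finset.sum_apply]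
    _ ≤ ENNReal.ofReal (variance (∑ i ∈ s, X i) μ / c ^ 2) :=
        meas_ge_le_variance_div_sq (memLp_finsetSum' s fun i _ => hmem i) hc
    _ ≤ _ := ENNReal.ofReal_le_ofReal (by gcongr)

theorem measure_le_abs_countEq_sub_le {m : ℕ} {p : Fin m → Ω → ℝ} (hp : ∀ i, Measurable (p i))
    (hind : iIndepFun p μ) (s : Finset (Fin m)) (c : ℝ) {t : ℝ} (ht : 0 < t) :
    μ {ω | t ≤ |(countEq s (fun i => p i ω) c : ℝ) - ∑ i ∈ s, (μ {ω | p i ω = c}).toReal|}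
      ≤ ENNReal.ofReal (s.card / t ^ 2) := by
  set X : Fin m → Ω → ℝ := fun i ω => ({c} : Set ℝ).indicator (fun _ => 1) (p i ω)
  have hXsum : ∀ ω, ∑ i ∈ s, X i ω = countEq s (fun i => p i ω) c := fun ω => by
    simp [X, countEq, Set.indicator_apply, Finset.sum_boole]
  have hXmean : ∀ i, μ[X i] = (μ {ω | p i ω = c}).toReal := fun i =>
    integral_indicator_one ((hp i) (measurableSet_singleton c))
  have hX01 : ∀ i ω, X i ω ∈ Icc (0 : ℝ) 1 := fun i ω => by
    by_cases h : p i ω = c <;> simp [X, h]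
  have hcheb := measure_le_abs_sum_sub_le (X := X)
    (fun i => measurable_const.indicator ((hp i) (measurableSet_singleton c))) hX01
    (hind.comp _ fun _ => measurable_const.indicator (measurableSet_singleton c)) s ht
  simp only [hXsum, hXmean] at hcheb
  exact hcheb

theorem tendstoInMeasure_countEq_div {p : (m : ℕ) → Fin m → Ω → ℝ}
    (hp : ∀ m i, Measurable (p m i)) (hindep : ∀ m, iIndepFun (p m) μ)
    (s : (m : ℕ) → Finset (Fin m)) {c a : ℝ}
    (hmean : Tendsto (fun m : ℕ => (∑ i ∈ s m, (μ {ω | p m i ω = c}).toReal) / m) atTop (𝓝 a)) :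
    TendstoInMeasure μ (fun m ω => (countEq (s m) (fun i => p m i ω) c : ℝ) / m) atTop
      fun _ => a := by
  rw [tendstoInMeasure_iff_dist]
  intro δ hδ
  have hupper : Tendsto (fun m : ℕ => ENNReal.ofReal (4 / δ ^ 2 / m)) atTop (𝓝 0) := by
    simpa using ENNReal.tendsto_ofReal (tendsto_const_div_atTop_nhds_zero_nat (4 / δ ^ 2))
  refine tendsto_of_tendsto_of_tendsto_of_le_of_le' tendsto_const_nhds hupper
    (Eventually.of_forall fun _ => zero_le) ?_
  filter_upwards [hmean.eventually (Metric.ball_mem_nhds a (half_pos hδ)),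
    eventually_gt_atTop 0] with m hmean_m hm
  have hm' : (0 : ℝ) < m := by exact_mod_cast hm
  set M := ∑ i ∈ s m, (μ {ω | p m i ω = c}).toReal
  have hsub : {ω | δ ≤ dist ((countEq (s m) (fun i => p m i ω) c : ℝ) / m) a}
      ⊆ {ω | δ / 2 * m ≤ |(countEq (s m) (fun i => p m i ω) c : ℝ) - M|} := by
    intro ω hω
    simp only [Set.mem_ofPred_eq, Real.dist_eq] at hω hmean_m ⊢
    rw [show ∀ x : ℝ, x - M = m * (x / m - M / m) by intro x; field_simp, abs_mul,
      abs_of_pos hm']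
    nlinarith [abs_sub_le ((countEq (s m) (fun i => p m i ω) c : ℝ) / m) (M / m) a]
  calc _ ≤ _ := measure_mono hsub
    _ ≤ ENNReal.ofReal ((s m).card / (δ / 2 * m) ^ 2) :=
        measure_le_abs_countEq_sub_le (hp m) (hindep m) (s m) c (by positivity)
    _ ≤ ENNReal.ofReal (4 / δ ^ 2 / m) := by
        refine ENNReal.ofReal_le_ofReal ?_
        calc ((s m).card : ℝ) / (δ / 2 * m) ^ 2 ≤ m / (δ / 2 * m) ^ 2 := by
              gcongr
              exact_mod_cast (Finset.card_le_univ _).trans_eq (Fintype.card_fin m)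
          _ = 4 / δ ^ 2 / m := by field_simp; ring

theorem tendstoInMeasure_countEq_div_of_measure_eq {p : (m : ℕ) → Fin m → Ω → ℝ}
    (hp : ∀ m i, Measurable (p m i)) (hindep : ∀ m, iIndepFun (p m) μ)
    (s : (m : ℕ) → Finset (Fin m)) {c π : ℝ} {r : ℝ≥0∞}
    (hs : ∀ m, ∀ i ∈ s m, μ {ω | p m i ω = c} = r)
    (hπ : Tendsto (fun m : ℕ => ((s m).card : ℝ) / m) atTop (𝓝 π)) :
    TendstoInMeasure μ (fun m ω => (countEq (s m) (fun i => p m i ω) c : ℝ) / m) atTop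
      fun _ => π * r.toReal := by
  refine tendstoInMeasure_countEq_div hp hindep s ?_
  have hsum : ∀ m, (∑ i ∈ s m, (μ {ω | p m i ω = c}).toReal) / m = (s m).card / m * r.toReal :=
    fun m => by rw [Finset.sum_congr rfl fun i hi => by rw [hs m i hi]]; simp [div_mul_eq_mul_div]
  simpa only [hsum] using hπ.mul_const r.toReal

end WeakLaw

namespace SupportLine

def IsOnGrid (L : ℕ) {m : ℕ} (v : Fin m → ℝ) : Prop :=
  ∀ i, ∃ ℓ : ℕ, 1 ≤ ℓ ∧ ℓ ≤ L ∧ v i = ℓ / L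

noncomputable def cumCount (L : ℕ) {m : ℕ} (v : Fin m → ℝ) (ℓ : ℕ) : ℕ :=
  (Finset.univ.filter fun i => v i ≤ ℓ / L).card

noncomputable def empPmf (L : ℕ) {m : ℕ} (v : Fin m → ℝ) (k : ℕ) : ℝ :=
  countEq Finset.univ v (k / L) / m

noncomputable def lineObj (α : ℝ) (L : ℕ) (x : ℕ → ℝ) (ℓ : ℕ) : ℝ :=
  α * ∑ k ∈ Finset.Icc 1 ℓ, x k - ℓ / L

def IsUniqueArgmax (g : ℕ → ℝ) (L ℓ : ℕ) : Prop :=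
  ℓ ≤ L ∧ ∀ j ≤ L, j ≠ ℓ → g j < g ℓ

section Grid

variable {L m : ℕ} {v : Fin m → ℝ}

theorem IsOnGrid.le_iff_lt_succ (hv : IsOnGrid L v) (i : Fin m) (ℓ : ℕ) :
    v i ≤ ℓ / L ↔ v i < (ℓ + 1 : ℕ) / L := by
  obtain ⟨j, hj, hjL, hvi⟩ := hv i
  have hL : (0 : ℝ) < L := by exact_mod_cast (show 0 < L by omega)
  rw [hvi, div_le_div_iff_of_pos_right hL, div_lt_div_iff_of_pos_right hL]
  norm_cast
  omega

theorem IsOnGrid.le_succ_iff (hv : IsOnGrid L v) (i : Fin m) (ℓ : ℕ) :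
    v i ≤ (ℓ + 1 : ℕ) / L ↔ v i ≤ ℓ / L ∨ v i = (ℓ + 1 : ℕ) / L := by
  rw [le_iff_lt_or_eq, ← hv.le_iff_lt_succ]

theorem cumCount_zero (hv : IsOnGrid L v) : cumCount L v 0 = 0 := by
  refine Finset.card_eq_zero.2 (Finset.filter_eq_empty_iff.2 fun i _ hi => ?_)
  obtain ⟨j, hj, hjL, hvi⟩ := hv i
  rw [hvi, Nat.cast_zero, zero_div] at hi
  exact (div_pos (Nat.cast_pos.2 hj) (Nat.cast_pos.2 (by omega))).not_ge hi

theorem cumCount_succ (hv : IsOnGrid L v) (ℓ : ℕ) :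
    cumCount L v (ℓ + 1) = cumCount L v ℓ + countEq Finset.univ v ((ℓ + 1 : ℕ) / L) := by
  rw [cumCount, cumCount, countEq, ← Finset.card_union_of_disjoint, ← Finset.filter_or]
  · exact congrArg Finset.card (Finset.filter_congr fun i _ => hv.le_succ_iff i ℓ)
  · refine Finset.disjoint_filter.2 fun i _ hle heq => ?_
    exact ((hv.le_iff_lt_succ i ℓ).1 hle).ne heq

theorem cumCount_eq_sum (hv : IsOnGrid L v) (ℓ : ℕ) :
    cumCount L v ℓ = ∑ k ∈ Finset.Icc 1 ℓ, countEq Finset.univ v (k / L) := by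
  induction ℓ with
  | zero => simp [cumCount_zero hv]
  | succ n ih => rw [cumCount_succ hv, ih, Finset.sum_Icc_succ_top (by omega)]

theorem cumCount_le (ℓ : ℕ) : cumCount L v ℓ ≤ m :=
  (Finset.card_filter_le _ _).trans_eq (Finset.card_fin m)

theorem cumCount_top (hv : IsOnGrid L v) : cumCount L v L = m := by
  rw [cumCount, Finset.filter_true_of_mem, Finset.card_fin]
  intro i _
  obtain ⟨j, -, hjL, hvi⟩ := hv i
  rw [hvi]
  gcongr

theorem lineObj_empPmf (α : ℝ) (hv : IsOnGrid L v) (ℓ : ℕ) :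
    lineObj α L (empPmf L v) ℓ = α * cumCount L v ℓ / m - ℓ / L := by
  simp only [lineObj, empPmf, ← Finset.sum_div, cumCount_eq_sum hv, Nat.cast_sum, mul_div_assoc]

theorem orderStat_eq (hv : IsOnGrid L v) {k ℓ : ℕ} (hlt : cumCount L v ℓ < k)
    (hle : k ≤ cumCount L v (ℓ + 1)) : orderStat v k = (ℓ + 1 : ℕ) / L := by
  rw [orderStat, if_neg (by omega)]
  refine IsLeast.csInf_eq ⟨hle, fun x hx => not_lt.1 fun hxlt => ?_⟩
  have hsub : (Finset.univ.filter fun i => v i ≤ x) ⊆ Finset.univ.filter fun i => v i ≤ ℓ / L :=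
    Finset.monotone_filter_right _ fun i _ hi => (hv.le_iff_lt_succ i ℓ).2 (hi.trans_lt hxlt)
  exact (hx.trans (Finset.card_le_card hsub)).not_gt hlt

theorem exists_cumCount_lt_le (hv : IsOnGrid L v) {k : ℕ} (hk : 0 < k) (hkm : k ≤ m) :
    ∃ ℓ < L, cumCount L v ℓ < k ∧ k ≤ cumCount L v (ℓ + 1) := by
  classical
  have hex : ∃ n, k ≤ cumCount L v n := ⟨L, (cumCount_top hv).symm ▸ hkm⟩
  obtain ⟨ℓ, hℓ⟩ : ∃ ℓ, Nat.find hex = ℓ + 1 :=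
    Nat.exists_eq_add_one.2 (Nat.pos_of_ne_zero fun h0 => by
      have := Nat.find_spec hex
      rw [h0, cumCount_zero hv] at this
      omega)
  refine ⟨ℓ, ?_, not_le.1 (Nat.find_min hex (by omega)), hℓ ▸ Nat.find_spec hex⟩
  have := Nat.find_min' hex ((cumCount_top hv).symm ▸ hkm)
  omega

end Grid

section LineObj

variable {α : ℝ} {L : ℕ} {x y : ℕ → ℝ}

theorem lineObj_zero : lineObj α L x 0 = 0 := by simp [lineObj]

theorem lineObj_succ (ℓ : ℕ) :
    lineObj α L x (ℓ + 1) = lineObj α L x ℓ + (α * x (ℓ + 1) - 1 / L) := by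
  rw [lineObj, lineObj, Finset.sum_Icc_succ_top (by omega)]
  push_cast
  ring

-- Otherwise the previous grid point would score `1 / L` more.
theorem IsUniqueArgmax.ne_zero {ℓ : ℕ} (h : IsUniqueArgmax (lineObj α L x) L ℓ) (hℓ : 0 < ℓ) :
    x ℓ ≠ 0 := by
  obtain ⟨n, rfl⟩ := Nat.exists_eq_add_one.2 hℓ
  intro hx
  have := h.2 n (by have := h.1; omega) (by omega)
  rw [lineObj_succ, hx, mul_zero, zero_sub] at this
  have : (0 : ℝ) ≤ 1 / L := by positivity
  linarith

theorem abs_lineObj_sub_le {δ : ℝ} (hδ : 0 ≤ δ) (hxy : ∀ k ∈ Finset.Icc 1 L, |x k - y k| ≤ δ)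
    {ℓ : ℕ} (hℓ : ℓ ≤ L) : |lineObj α L x ℓ - lineObj α L y ℓ| ≤ |α| * (L * δ) := by
  rw [lineObj, lineObj, sub_sub_sub_cancel_right, ← mul_sub, ← Finset.sum_sub_distrib, abs_mul]
  gcongr
  calc |∑ k ∈ Finset.Icc 1 ℓ, (x k - y k)| ≤ ∑ k ∈ Finset.Icc 1 ℓ, |x k - y k| :=
        Finset.abs_sum_le_sum_abs _ _
    _ ≤ ∑ _k ∈ Finset.Icc 1 ℓ, δ :=
        Finset.sum_le_sum fun k hk => hxy k (Finset.Icc_subset_Icc_right hℓ hk)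
    _ ≤ L * δ := by
        rw [Finset.sum_const, Nat.card_Icc, nsmul_eq_mul]
        gcongr
        exact_mod_cast (by omega : ℓ + 1 - 1 ≤ L)

theorem IsUniqueArgmax.exists_pos_of_close {ℓ : ℕ} (h : IsUniqueArgmax (lineObj α L y) L ℓ) :
    ∃ δ > 0, ∀ x : ℕ → ℝ, (∀ k ∈ Finset.Icc 1 L, |x k - y k| < δ) →
      IsUniqueArgmax (lineObj α L x) L ℓ := by
  have hev : ∀ᶠ δ in 𝓝 (0 : ℝ), ∀ j ∈ (Finset.range (L + 1)).erase ℓ,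
      lineObj α L y j + 2 * (|α| * (L * δ)) < lineObj α L y ℓ := by
    refine (Filter.eventually_all_finset _).2 fun j hj => ?_
    obtain ⟨hjℓ, hjL⟩ := Finset.mem_erase.1 hj
    refine Filter.Tendsto.eventually_lt_const (h.2 j (by simpa [Nat.lt_succ_iff] using hjL) hjℓ) ?_
    exact (by fun_prop : Continuous fun δ : ℝ => lineObj α L y j + 2 * (|α| * (L * δ))).tendsto' _ _
      (by simp)
  obtain ⟨δ, hgap, hδ⟩ := ((hev.filter_mono nhdsWithin_le_nhds).and self_mem_nhdsWithin).exists
    (f := 𝓝[>] (0 : ℝ))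
  refine ⟨δ, hδ, fun x hx => ⟨h.1, fun j hjL hjℓ => ?_⟩⟩
  have hxy : ∀ k ∈ Finset.Icc 1 L, |x k - y k| ≤ δ := fun k hk => (hx k hk).le
  have hj := abs_le.1 (abs_lineObj_sub_le (α := α) hδ.le hxy hjL)
  have hℓ := abs_le.1 (abs_lineObj_sub_le (α := α) hδ.le hxy h.1)
  have := hgap j (Finset.mem_erase.2 ⟨hjℓ, Finset.mem_range.2 (by omega)⟩)
  linarith [hj.2, hℓ.1]

theorem IsUniqueArgmax.exists_vanishing_exceptional_sets {Ω ι : Type*} [MeasurableSpace Ω]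
    {μ : Measure Ω} {l : Filter ι} {X : ι → Ω → ℕ → ℝ} {ℓ : ℕ}
    (h : IsUniqueArgmax (lineObj α L y) L ℓ)
    (hX : ∀ k ∈ Finset.Icc 1 L, TendstoInMeasure μ (fun n ω => X n ω k) l fun _ => y k) :
    ∃ B : ι → Set Ω, Tendsto (fun n => μ (B n)) l (𝓝 0) ∧
      ∀ n, ∀ ω ∉ B n, IsUniqueArgmax (lineObj α L (X n ω)) L ℓ := by
  obtain ⟨δ, hδ, hstable⟩ := h.exists_pos_of_close
  exact ⟨fun n => ⋃ k ∈ Finset.Icc 1 L, {ω | δ ≤ dist (X n ω k) (y k)},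
    tendsto_measure_biUnion_finset fun k hk => tendstoInMeasure_iff_dist.1 (hX k hk) δ hδ,
    fun n ω hω => hstable _ fun k hk => not_le.1 fun hk' => hω (Set.mem_biUnion hk hk')⟩

end LineObj

section Procedure

variable {α : ℝ} {L m : ℕ} {v : Fin m → ℝ}

theorem slObj_zero : slObj α v 0 = 0 := by simp [slObj, orderStat]

theorem slR_eq_of_forall_lt {k : ℕ} (hkm : k ≤ m)
    (hk : ∀ j ≤ m, j ≠ k → slObj α v j < slObj α v k) : slR α v = k := by
  have hset : {j : ℕ | j ≤ m ∧ ∀ i ≤ m, slObj α v i ≤ slObj α v j} = {k} := by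
    ext j
    refine ⟨fun ⟨hjm, hj⟩ => by_contra fun hjk => (hk j hjm hjk).not_ge (hj k hkm),
      fun hjk => hjk ▸ ⟨hkm, fun i him => ?_⟩⟩
    rcases eq_or_ne i k with rfl | hik
    · exact le_rfl
    · exact (hk i him hik).le
  rw [slR, hset, csSup_singleton]

theorem exists_slObj_eq (hv : IsOnGrid L v) {j : ℕ} (hjm : j ≤ m) :
    ∃ ℓ ≤ L, j ≤ cumCount L v ℓ ∧ slObj α v j = α * j / m - ℓ / L := by
  rcases Nat.eq_zero_or_pos j with rfl | hj
  · exact ⟨0, Nat.zero_le _, Nat.zero_le _, by simp [slObj_zero]⟩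
  obtain ⟨ℓ, hℓL, hlt, hle⟩ := exists_cumCount_lt_le hv hj hjm
  exact ⟨ℓ + 1, hℓL, hle, by rw [slObj, orderStat_eq hv hlt hle]⟩

theorem IsUniqueArgmax.cumCount_lt (hv : IsOnGrid L v) {n : ℕ}
    (h : IsUniqueArgmax (lineObj α L (empPmf L v)) L (n + 1)) :
    cumCount L v n < cumCount L v (n + 1) := by
  have hpos : 0 < countEq Finset.univ v ((n + 1 : ℕ) / L) :=
    Nat.pos_of_ne_zero fun h0 => h.ne_zero n.succ_pos (by rw [empPmf, h0, Nat.cast_zero, zero_div])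
  rw [cumCount_succ hv]
  omega

theorem slObj_cumCount (hv : IsOnGrid L v) {ℓ : ℕ}
    (h : IsUniqueArgmax (lineObj α L (empPmf L v)) L ℓ) :
    slObj α v (cumCount L v ℓ) = lineObj α L (empPmf L v) ℓ := by
  cases ℓ with
  | zero => rw [cumCount_zero hv, slObj_zero, lineObj_zero]
  | succ n => rw [slObj, orderStat_eq hv (h.cumCount_lt hv) le_rfl, lineObj_empPmf α hv]

theorem slR_eq_cumCount (hv : IsOnGrid L v) (hα : 0 < α) {ℓ : ℕ}
    (h : IsUniqueArgmax (lineObj α L (empPmf L v)) L ℓ) :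
    slR α v = cumCount L v ℓ := by
  refine slR_eq_of_forall_lt (cumCount_le ℓ) fun j hjm hjℓ => ?_
  obtain ⟨k, hkL, hjk, hobj⟩ := exists_slObj_eq (α := α) hv hjm
  rw [slObj_cumCount hv h, hobj]
  have hle : α * j / m - k / L ≤ lineObj α L (empPmf L v) k := by
    rw [lineObj_empPmf α hv]
    gcongr
  rcases eq_or_ne k ℓ with rfl | hkℓ
  · have hjk' : j < cumCount L v k := lt_of_le_of_ne hjk hjℓ
    have hm : (0 : ℝ) < m := Nat.cast_pos.2 (by have := cumCount_le (L := L) (v := v) k; omega)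
    rw [lineObj_empPmf α hv]
    gcongr
  · exact hle.trans_lt (h.2 k hkL hkℓ)

theorem slTau_eq (hv : IsOnGrid L v) (hα : 0 < α) {n : ℕ}
    (h : IsUniqueArgmax (lineObj α L (empPmf L v)) L (n + 1)) :
    slTau α v = (n + 1 : ℕ) / L := by
  rw [slTau, slR_eq_cumCount hv hα h, orderStat_eq hv (h.cumCount_lt hv) le_rfl]

end Procedure

section Integrand

variable {α : ℝ} {L m : ℕ} {v : Fin m → ℝ}

noncomputable def bFDRIntegrand (α : ℝ) {m : ℕ} (H0 : Finset (Fin m)) (v : Fin m → ℝ) : ℝ :=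
  if 1 ≤ slR α v then
    ({i : Fin m | i ∈ H0 ∧ v i = slTau α v}.ncard : ℝ) / ({i : Fin m | v i = slTau α v}.ncard : ℝ)
  else 0

theorem bFDRsl_eq_integral {Ω : Type} [MeasurableSpace Ω] (μ : Measure Ω) (p : Fin m → Ω → ℝ)
    (H0 : Finset (Fin m)) : bFDRsl μ p H0 α = ∫ ω, bFDRIntegrand α H0 (fun i => p i ω) ∂μ :=
  rfl

theorem abs_bFDRIntegrand_le_one (H0 : Finset (Fin m)) : |bFDRIntegrand α H0 v| ≤ 1 := by
  unfold bFDRIntegrand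
  split_ifs
  · rw [abs_of_nonneg (by positivity)]
    exact div_le_one_of_le₀ (by exact_mod_cast Set.ncard_le_ncard fun i (hi : _ ∧ _) => hi.2)
      (Nat.cast_nonneg _)
  · simp

theorem bFDRIntegrand_eq (hv : IsOnGrid L v) (hα : 0 < α) (H0 : Finset (Fin m)) {ℓ : ℕ}
    (h : IsUniqueArgmax (lineObj α L (empPmf L v)) L ℓ) :
    bFDRIntegrand α H0 v =
      if 0 < ℓ then (countEq H0 v (ℓ / L) / m : ℝ) / empPmf L v ℓ else 0 := by
  rw [bFDRIntegrand, slR_eq_cumCount hv hα h]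
  cases ℓ with
  | zero => simp [cumCount_zero hv]
  | succ n =>
    have hm : (m : ℝ) ≠ 0 := fun hm => h.ne_zero n.succ_pos (by rw [empPmf, hm, div_zero])
    rw [if_pos (Nat.one_le_iff_ne_zero.2 (h.cumCount_lt hv).ne_bot), slTau_eq hv hα h,
      if_pos n.succ_pos, empPmf, div_div_div_cancel_right₀ hm]
    simp only [countEq, Set.ncard_eq_toFinset_card', Set.toFinset_ofPred]
    congr 3
    ext i
    simp

theorem measurable_bFDRIntegrand {Ω : Type*} [MeasurableSpace Ω] {p : Fin m → Ω → ℝ}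
    (hp : ∀ i, Measurable (p i)) (hv : ∀ ω, IsOnGrid L fun i => p i ω) (H0 : Finset (Fin m)) :
    Measurable fun ω => bFDRIntegrand α H0 fun i => p i ω := by
  refine Measurable.comp_of_forall_mem_finset (measurable_pi_lambda _ hp)
    (S := Fintype.piFinset fun _ => (Finset.Icc 1 L).image fun ℓ : ℕ => (ℓ : ℝ) / L)
    (fun ω => Fintype.mem_piFinset.2 fun i => ?_) _
  obtain ⟨ℓ, h1, h2, h3⟩ := hv ω i
  exact Finset.mem_image.2 ⟨ℓ, Finset.mem_Icc.2 ⟨h1, h2⟩, h3.symm⟩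

end Integrand

end SupportLine

open SupportLine

theorem stmt13_general
    {Ω : Type} [MeasurableSpace Ω] (μ : Measure Ω) [IsProbabilityMeasure μ]
    (L : ℕ) (α : ℝ) (hα : α ∈ Ioo (0 : ℝ) 1)
    (p : (m : ℕ) → Fin m → Ω → ℝ) (hp : ∀ m i, Measurable (p m i))
    (H0 : (m : ℕ) → Finset (Fin m))
    (hsupp : ∀ m i ω, ∃ ℓ : ℕ, 1 ≤ ℓ ∧ ℓ ≤ L ∧ p m i ω = (ℓ : ℝ) / L)
    (hindep : ∀ m, iIndepFun (p m) μ)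
    (hnull : ∀ m, ∀ i ∈ H0 m, ∀ ℓ : ℕ, 1 ≤ ℓ → ℓ ≤ L →
      μ {ω | p m i ω = (ℓ : ℝ) / L} = (L : ENNReal)⁻¹)
    (fstar : ℝ → ℝ)
    (hconv : ∀ ℓ : ℕ, 1 ≤ ℓ → ℓ ≤ L →
      Tendsto (fun m : ℕ =>
          (∑ i : Fin m, (μ {ω | p m i ω = (ℓ : ℝ) / L}).toReal) / (m : ℝ))
        atTop (nhds (fstar ((ℓ : ℝ) / L))))
    (π0star : ℝ)
    (hπ0conv : Tendsto (fun m : ℕ => ((H0 m).card : ℝ) / m) atTop (nhds π0star))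
    (ℓstar : ℕ) (hℓstarLe : ℓstar ≤ L)
    (hℓstarMax : ∀ ℓ : ℕ, ℓ ≤ L → ℓ ≠ ℓstar →
      α * ∑ k ∈ Finset.Icc 1 ℓ, fstar ((k : ℝ) / L) - (ℓ : ℝ) / L
        < α * ∑ k ∈ Finset.Icc 1 ℓstar, fstar ((k : ℝ) / L) - (ℓstar : ℝ) / L) :
    Tendsto (fun m : ℕ => bFDRsl μ (p m) (H0 m) α) atTop
      (nhds (if 0 < ℓstar then π0star / ((L : ℝ) * fstar ((ℓstar : ℝ) / L)) else 0)) := by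
  set a : ℕ → ℝ := fun k => fstar (k / L)
  have hgrid : ∀ m ω, IsOnGrid L fun i => p m i ω := fun m ω i => hsupp m i ω
  have hmax : IsUniqueArgmax (lineObj α L a) L ℓstar := ⟨hℓstarLe, hℓstarMax⟩
  have hemp : ∀ k ∈ Finset.Icc 1 L, TendstoInMeasure μ
      (fun m ω => empPmf L (fun i => p m i ω) k) atTop fun _ => a k := fun k hk =>
    tendstoInMeasure_countEq_div hp hindep _
      (hconv k (Finset.mem_Icc.1 hk).1 (Finset.mem_Icc.1 hk).2)
  obtain ⟨B, hB, hgood⟩ := hmax.exists_vanishing_exceptional_sets hemp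
  have hlim : TendstoInMeasure μ (fun m ω => if 0 < ℓstar then
        (countEq (H0 m) (fun i => p m i ω) (ℓstar / L) / m : ℝ) / empPmf L (fun i => p m i ω) ℓstar
      else 0) atTop
      fun _ => if 0 < ℓstar then π0star / ((L : ℝ) * fstar ((ℓstar : ℝ) / L)) else 0 := by
    split_ifs with hℓ
    · have hnull' := tendstoInMeasure_countEq_div_of_measure_eq hp hindep H0
        (fun m i hi => hnull m i hi ℓstar hℓ hℓstarLe) hπ0conv
      rw [ENNReal.toReal_inv, ENNReal.toReal_natCast, ← div_eq_mul_inv] at hnull'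
      rw [← div_div]
      exact TendstoInMeasure.continuousAt_comp₂ (h := fun z => z.1 / z.2) hnull'
        (hemp ℓstar (Finset.mem_Icc.2 ⟨hℓ, hℓstarLe⟩))
        (continuousAt_fst.div continuousAt_snd (hmax.ne_zero hℓ))
    · exact tendstoInMeasure_const_self _
  have hoff : ∀ᶠ m in atTop, ∀ ω ∉ B m, bFDRIntegrand α (H0 m) (fun i => p m i ω) = _ :=
    Eventually.of_forall fun m ω hω => bFDRIntegrand_eq (hgrid m ω) hα.1 (H0 m) (hgood m ω hω)
  simpa [bFDRsl_eq_integral] using tendsto_integral_of_tendstoInMeasure_of_norm_le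
    (fun m => (measurable_bFDRIntegrand (hp m) (hgrid m) (H0 m)).aestronglyMeasurable)
    (fun m ω => abs_bFDRIntegrand_le_one _) (integrable_const _)
    (TendstoInMeasure.congr_of_eqOn_compl hlim hB hoff)

/-- Fixed grid size `L`, `m → ∞`.  For a triangular array of independent
grid-supported p-values whose nulls are uniform on `{1/L, ..., L/L}`, if the average pmf
converges pointwise to `f*`, the null proportion converges to `π₀* ∈ (0,1)`, and the
population support-line objective has a unique maximizer `ℓ*` over `{0, ..., L}`, then
the boundary FDR of the support-line procedure (ties broken uniformly at random)
converges to `π₀* / (L f*(ℓ*/L)) · 1{ℓ* > 0}`. -/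
theorem stmt13
    {Ω : Type} [MeasurableSpace Ω] (μ : Measure Ω) [IsProbabilityMeasure μ]
    (L : ℕ) (hL : 1 ≤ L) (α : ℝ) (hα : α ∈ Ioo (0 : ℝ) 1)
    (p : (m : ℕ) → Fin m → Ω → ℝ) (hp : ∀ m i, Measurable (p m i))
    (H0 : (m : ℕ) → Finset (Fin m))
    (hsupp : ∀ m i ω, ∃ ℓ : ℕ, 1 ≤ ℓ ∧ ℓ ≤ L ∧ p m i ω = (ℓ : ℝ) / L)
    (hindep : ∀ m, iIndepFun (p m) μ)
    (hnull : ∀ m, ∀ i ∈ H0 m, ∀ ℓ : ℕ, 1 ≤ ℓ → ℓ ≤ L →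
      μ {ω | p m i ω = (ℓ : ℝ) / L} = (L : ENNReal)⁻¹)
    (fstar : ℝ → ℝ) (hfstarNonneg : ∀ x, 0 ≤ fstar x)
    (hfstarPmf : ∑ ℓ ∈ Finset.Icc 1 L, fstar ((ℓ : ℝ) / L) = 1)
    (hconv : ∀ ℓ : ℕ, 1 ≤ ℓ → ℓ ≤ L →
      Tendsto (fun m : ℕ =>
          (∑ i : Fin m, (μ {ω | p m i ω = (ℓ : ℝ) / L}).toReal) / (m : ℝ))
        atTop (nhds (fstar ((ℓ : ℝ) / L))))
    (π0star : ℝ) (hπ0 : π0star ∈ Ioo (0 : ℝ) 1)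
    (hπ0conv : Tendsto (fun m : ℕ => ((H0 m).card : ℝ) / m) atTop (nhds π0star))
    (ℓstar : ℕ) (hℓstarLe : ℓstar ≤ L)
    (hℓstarMax : ∀ ℓ : ℕ, ℓ ≤ L → ℓ ≠ ℓstar →
      α * ∑ k ∈ Finset.Icc 1 ℓ, fstar ((k : ℝ) / L) - (ℓ : ℝ) / L
        < α * ∑ k ∈ Finset.Icc 1 ℓstar, fstar ((k : ℝ) / L) - (ℓstar : ℝ) / L) :
    Tendsto (fun m : ℕ => bFDRsl μ (p m) (H0 m) α) atTop
      (nhds (if 0 < ℓstar then π0star / ((L : ℝ) * fstar ((ℓstar : ℝ) / L)) else 0)) :=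
  stmt13_general μ L α hα p hp H0 hsupp hindep hnull fstar hconv π0star hπ0conv ℓstar hℓstarLe
    hℓstarMax
end

section
/- Let p_1,...,p_m ∈ [0,1], α > 0, ε > 0, and τ* ∈ [0,1]. Let p_(1) ≤ ... ≤ p_(m) be the sorted values with p_(0) := 0, let R_α be any maximizer over k ∈ {0,...,m} of k ↦ αk/m − p_(k), and set τ̂_α := p_(R_α). Let i* := max{i : p_(i) ≤ τ*} (with i* := 0 if no such i exists). If τ̂_α > τ* + ε, then there exists an integer k ≥ 1 with i* + k ≤ m such that p_(i*+k) ≤ τ* + αk/m and k > mε/α. -/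
open MeasureTheory Filter Set

lemma orderStat_nonneg' {m : ℕ} (v : Fin m → ℝ) (hv : ∀ i, 0 ≤ v i) (k : ℕ) :
    0 ≤ orderStat v k := by
  unfold orderStat
  split
  · exact le_refl 0
  · rename_i hk
    apply Real.sInf_nonneg
    intro x hx
    simp only [mem_setOf_eq] at hx
    have hpos : 0 < (Finset.univ.filter (fun i => v i ≤ x)).card :=
      lt_of_lt_of_le (Nat.pos_of_ne_zero hk) hx
    obtain ⟨i, hi⟩ := Finset.card_pos.mp hpos
    have := Finset.mem_filter.mp hi
    exact le_trans (hv i) this.2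

lemma orderStat_mono' {m : ℕ} (v : Fin m → ℝ) (hv : ∀ i, v i ∈ Icc (0 : ℝ) 1)
    {j k : ℕ} (hjk : j ≤ k) (hk : k ≤ m) : orderStat v j ≤ orderStat v k := by
  rcases Nat.eq_zero_or_pos j with hj | hj
  · rw [hj]
    have : orderStat v 0 = 0 := by simp [orderStat]
    rw [this]
    exact orderStat_nonneg' v (fun i => (hv i).1) k
  · have hkpos : 0 < k := lt_of_lt_of_le hj hjk
    unfold orderStat
    rw [if_neg (by omega : j ≠ 0), if_neg (by omega : k ≠ 0)]
    apply csInf_le_csInf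
    · refine ⟨0, fun x hx => ?_⟩
      simp only [mem_setOf_eq] at hx
      have hpos : 0 < (Finset.univ.filter (fun i => v i ≤ x)).card :=
        lt_of_lt_of_le hj hx
      obtain ⟨i, hi⟩ := Finset.card_pos.mp hpos
      have := Finset.mem_filter.mp hi
      exact le_trans (hv i).1 this.2
    · refine ⟨1, ?_⟩
      simp only [mem_setOf_eq]
      have : (Finset.univ.filter (fun i => v i ≤ (1:ℝ))) = Finset.univ := by
        ext i; simp [(hv i).2]
      rw [this, Finset.card_univ, Fintype.card_fin]
      exact hk
    · intro x hx
      simp only [mem_setOf_eq] at hx ⊢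
      exact le_trans hjk hx

/-- if the support-line threshold `τ̂_α` (given by any maximizer `R`
of the support-line objective) exceeds `τ* + ε`, then there is `k ≥ 1` with
`i* + k ≤ m`, `p_(i*+k) ≤ τ* + αk/m` and `k > mε/α`, where
`i* = max {i : p_(i) ≤ τ*}`. -/
theorem stmt16 (m : ℕ) (p : Fin m → ℝ) (hp : ∀ i, p i ∈ Icc (0 : ℝ) 1)
    (α : ℝ) (hα : 0 < α) (ε : ℝ) (hε : 0 < ε) (τstar : ℝ) (hτ : τstar ∈ Icc (0 : ℝ) 1)
    (R : ℕ) (hRle : R ≤ m) (hRmax : ∀ j ≤ m, slObj α p j ≤ slObj α p R)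
    (istar : ℕ) (histar : istar = sSup {i : ℕ | i ≤ m ∧ orderStat p i ≤ τstar})
    (hbig : orderStat p R > τstar + ε) :
    ∃ k : ℕ, 1 ≤ k ∧ istar + k ≤ m ∧
      orderStat p (istar + k) ≤ τstar + α * (k : ℝ) / (m : ℝ) ∧
      (m : ℝ) * ε / α < (k : ℝ) := by
  have hτ0 : (0:ℝ) ≤ τstar := hτ.1
  -- m > 0
  rcases Nat.eq_zero_or_pos m with hm0 | hmpos
  · exfalso
    have hR0 : R = 0 := le_antisymm (hm0 ▸ hRle) (Nat.zero_le _)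
    have : orderStat p R = 0 := by simp [hR0, orderStat]
    rw [this] at hbig
    linarith
  have hmR : (0:ℝ) < (m:ℝ) := by exact_mod_cast hmpos
  -- i* properties
  have hset : {i : ℕ | i ≤ m ∧ orderStat p i ≤ τstar}.Nonempty := by
    refine ⟨0, Nat.zero_le _, ?_⟩
    simp [orderStat, hτ0]
  have hbdd : BddAbove {i : ℕ | i ≤ m ∧ orderStat p i ≤ τstar} :=
    ⟨m, fun i hi => hi.1⟩
  have histar_mem : istar ∈ {i : ℕ | i ≤ m ∧ orderStat p i ≤ τstar} := by
    rw [histar]; exact Nat.sSup_mem hset hbdd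
  obtain ⟨histar_le, histar_p⟩ := histar_mem
  -- R > istar
  have hRi : istar < R := by
    by_contra h
    push_neg at h
    have := orderStat_mono' p hp h histar_le
    linarith
  refine ⟨R - istar, by omega, by omega, ?_, ?_⟩
  · have hmax := hRmax istar histar_le
    unfold slObj at hmax
    have hcast : ((R - istar : ℕ) : ℝ) = (R:ℝ) - (istar:ℝ) := by
      push_cast [Nat.cast_sub hRi.le]; ring
    have h1 : (istar : ℕ) + (R - istar) = R := by omega
    rw [h1, hcast]
    have : orderStat p R ≤ orderStat p istar + (α * (R:ℝ) / m - α * (istar:ℝ) / m) := by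
      linarith
    calc orderStat p R ≤ orderStat p istar + (α * (R:ℝ) / m - α * (istar:ℝ) / m) := this
      _ ≤ τstar + α * ((R:ℝ) - (istar:ℝ)) / m := by
          have : α * (R:ℝ) / m - α * (istar:ℝ) / m = α * ((R:ℝ) - (istar:ℝ)) / m := by ring
          linarith
  · -- k > mε/α
    have hmax := hRmax istar histar_le
    unfold slObj at hmax
    have hkR : ((R - istar : ℕ) : ℝ) = (R:ℝ) - (istar:ℝ) := by
      push_cast [Nat.cast_sub hRi.le]; ring
    rw [hkR]
    have h2 : τstar + ε < τstar + α * ((R:ℝ) - (istar:ℝ)) / m := by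
      have : α * (R:ℝ) / m - α * (istar:ℝ) / m = α * ((R:ℝ) - (istar:ℝ)) / m := by ring
      linarith
    have h3 : ε < α * ((R:ℝ) - (istar:ℝ)) / m := by linarith
    rw [div_lt_iff₀ hα]
    have := (lt_div_iff₀ hmR).mp h3
    linarith
end
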